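/- arXiv:1205.1834 — 10 statements merged into one kernel-verified Lean document; each statement's English description precedes it below -/
import Mathlib

section
/- Weak regularity of nonzero momentum values: let m ≥ 2 and let x₀, y₀ ∈ ℝ^m be linearly independent. The kernel of the linear map from ℝ^m × ℝ^m to m×m real matrices given by (u,v) ↦ u·y₀ᵀ + x₀·vᵀ − v·x₀ᵀ − y₀·uᵀ (the derivative of the momentum mapping J(x,y) = x·yᵀ − y·xᵀ at the point (x₀,y₀)) is exactly the set {(α·x₀ + β·y₀, γ·x₀ − α·y₀) : α, β, γ ∈ ℝ}. -/
open Matrix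

/-- **Weak regularity of nonzero momentum values.**
Let `m ≥ 2` and let `x₀, y₀ ∈ ℝ^m` be linearly independent.  The kernel of the linear map
`(u,v) ↦ u·y₀ᵀ + x₀·vᵀ − v·x₀ᵀ − y₀·uᵀ` (the derivative of the momentum mapping
`J(x,y) = x·yᵀ − y·xᵀ` at `(x₀, y₀)`) is exactly
`{(α·x₀ + β·y₀, γ·x₀ − α·y₀) : α, β, γ ∈ ℝ}`. -/
theorem stmt1 (m : ℕ) (hm : 2 ≤ m) (x₀ y₀ : Fin m → ℝ)
    (hxy : LinearIndependent ℝ ![x₀, y₀]) :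
    {p : (Fin m → ℝ) × (Fin m → ℝ) |
        Matrix.vecMulVec p.1 y₀ + Matrix.vecMulVec x₀ p.2
          - Matrix.vecMulVec p.2 x₀ - Matrix.vecMulVec y₀ p.1 = 0}
      = {p : (Fin m → ℝ) × (Fin m → ℝ) |
          ∃ α β γ : ℝ, p = (α • x₀ + β • y₀, γ • x₀ - α • y₀)} := by
  have hli : ∀ s t : ℝ, s • x₀ + t • y₀ = 0 → s = 0 ∧ t = 0 :=
    LinearIndependent.pair_iff.mp hxy
  set xx := x₀ ⬝ᵥ x₀ with hxxdef
  set yy := y₀ ⬝ᵥ y₀ with hyydef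
  set xy := x₀ ⬝ᵥ y₀ with hxydef
  have hy0 : y₀ ≠ 0 := by
    intro h
    have := (hli 0 1 (by simp [h])).2
    norm_num at this
  have hx0 : x₀ ≠ 0 := by
    intro h
    have := (hli 1 0 (by simp [h])).1
    norm_num at this
  have hxx : xx ≠ 0 := fun h => hx0 (dotProduct_self_eq_zero.mp h)
  have hyy : yy ≠ 0 := fun h => hy0 (dotProduct_self_eq_zero.mp h)
  have hG : xx * yy - xy * xy ≠ 0 := by
    intro hGz
    have hz : (yy • x₀ - xy • y₀) ⬝ᵥ (yy • x₀ - xy • y₀) = 0 := by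
      simp only [sub_dotProduct, dotProduct_sub, smul_dotProduct, dotProduct_smul,
        smul_eq_mul, ← hxxdef, ← hyydef, ← hxydef, dotProduct_comm y₀ x₀]
      linear_combination yy * hGz
    have hz0 : yy • x₀ - xy • y₀ = 0 := dotProduct_self_eq_zero.mp hz
    have := (hli yy (-xy) (by rw [neg_smul, ← sub_eq_add_neg]; exact hz0)).1
    exact hyy this
  ext p
  obtain ⟨u, v⟩ := p
  simp only [Set.mem_setOf_eq]
  constructor
  · intro h
    have hM : ∀ i j, u i * y₀ j + x₀ i * v j - v i * x₀ j - y₀ i * u j = 0 := by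
      intro i j
      have := congrFun (congrFun h i) j
      simpa [Matrix.add_apply, Matrix.sub_apply, Matrix.vecMulVec_apply] using this
    set ux := u ⬝ᵥ x₀ with huxdef
    set uy := u ⬝ᵥ y₀ with huydef
    set vx := v ⬝ᵥ x₀ with hvxdef
    set vy := v ⬝ᵥ y₀ with hvydef
    have E1 : ∀ i, u i * xy + x₀ i * vx - v i * xx - y₀ i * ux = 0 := by
      intro i
      have h0 : ∑ j, (u i * y₀ j + x₀ i * v j - v i * x₀ j - y₀ i * u j) * x₀ j = 0 := by
        simp [hM]
      calc u i * xy + x₀ i * vx - v i * xx - y₀ i * ux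
          = ∑ j, (u i * y₀ j + x₀ i * v j - v i * x₀ j - y₀ i * u j) * x₀ j := by
            simp only [hxydef, hvxdef, hxxdef, huxdef, dotProduct, Finset.mul_sum,
              dotProduct_comm x₀ y₀]
            rw [← Finset.sum_add_distrib, ← Finset.sum_sub_distrib, ← Finset.sum_sub_distrib]
            exact Finset.sum_congr rfl fun j _ => by ring
        _ = 0 := h0
    have E2 : ∀ i, u i * yy + x₀ i * vy - v i * xy - y₀ i * uy = 0 := by
      intro i
      have h0 : ∑ j, (u i * y₀ j + x₀ i * v j - v i * x₀ j - y₀ i * u j) * y₀ j = 0 := by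
        simp [hM]
      calc u i * yy + x₀ i * vy - v i * xy - y₀ i * uy
          = ∑ j, (u i * y₀ j + x₀ i * v j - v i * x₀ j - y₀ i * u j) * y₀ j := by
            simp only [hyydef, hvydef, hxydef, huydef, dotProduct, Finset.mul_sum]
            rw [← Finset.sum_add_distrib, ← Finset.sum_sub_distrib, ← Finset.sum_sub_distrib]
            exact Finset.sum_congr rfl fun j _ => by ring
        _ = 0 := h0
    have S : ux * yy + xx * vy - vx * xy - xy * uy = 0 := by
      have h0 : ∑ i, x₀ i * (u i * yy + x₀ i * vy - v i * xy - y₀ i * uy) = 0 := by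
        simp [E2]
      calc ux * yy + xx * vy - vx * xy - xy * uy
          = ∑ i, x₀ i * (u i * yy + x₀ i * vy - v i * xy - y₀ i * uy) := by
            simp only [huxdef, hxxdef, hvxdef, hxydef, dotProduct]
            rw [Finset.sum_mul, Finset.sum_mul, Finset.sum_mul, Finset.sum_mul]
            rw [← Finset.sum_add_distrib, ← Finset.sum_sub_distrib, ← Finset.sum_sub_distrib]
            exact Finset.sum_congr rfl fun i _ => by ring
        _ = 0 := h0
    set G := xx * yy - xy * xy with hGdef
    refine ⟨(xy * vx - xx * vy) / G, (xx * uy - xy * ux) / G, (yy * vx - xy * vy) / G, ?_⟩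
    have hu : ∀ i, G * u i = (xy * vx - xx * vy) * x₀ i + (xx * uy - xy * ux) * y₀ i := by
      intro i
      linear_combination xx * E2 i - xy * E1 i
    have hv : ∀ i, G * v i = (yy * vx - xy * vy) * x₀ i + (xy * uy - yy * ux) * y₀ i := by
      intro i
      linear_combination xy * E2 i - yy * E1 i
    ext i <;> simp only [Prod.fst, Prod.snd, Pi.add_apply, Pi.sub_apply, Pi.smul_apply,
      smul_eq_mul]
    · field_simp
      linear_combination hu i
    · field_simp
      linear_combination hv i - y₀ i * S
  · rintro ⟨α, β, γ, hp⟩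
    injection hp with h1 h2
    subst h1; subst h2
    ext i j
    simp only [Matrix.add_apply, Matrix.sub_apply, Matrix.vecMulVec_apply, Pi.add_apply,
      Pi.sub_apply, Pi.smul_apply, smul_eq_mul, Matrix.zero_apply]
    ring
end

section
/- The Hamiltonian flow of the total angular momentum J is explicit and 2π-periodic: let m ≥ 2 and let (x₀,y₀) ∈ ℝ^m × ℝ^m satisfy W₀ := ‖x₀‖²‖y₀‖² − ⟨x₀,y₀⟩² > 0, and set J₀ = √W₀. Define the curves x(t) = cos t · x₀ + (sin t / J₀)·(‖x₀‖²·y₀ − ⟨x₀,y₀⟩·x₀) and y(t) = cos t · y₀ − (sin t / J₀)·(‖y₀‖²·x₀ − ⟨x₀,y₀⟩·y₀). Then for all t ∈ ℝ: (i) ‖x(t)‖² = ‖x₀‖², ‖y(t)‖² = ‖y₀‖² and ⟨x(t),y(t)⟩ = ⟨x₀,y₀⟩; (ii) x'(t) = (‖x(t)‖²·y(t) − ⟨x(t),y(t)⟩·x(t))/J₀ and y'(t) = −(‖y(t)‖²·x(t) − ⟨x(t),y(t)⟩·y(t))/J₀, i.e. the curve solves Hamilton's equations ẋ = ∇_y J,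 ẏ = −∇_x J for J(x,y) = √(‖x‖²‖y‖² − ⟨x,y⟩²); (iii) the curve is 2π-periodic: x(t + 2π) = x(t) and y(t + 2π) = y(t). -/
/-!
Write `u = ∇_y J(x₀, y₀)` and `v = ∇_x J(x₀, y₀)`, so that `x(t) = cos t • x₀ + sin t • u` and
`y(t) = cos t • y₀ - sin t • v`. A direct computation gives `⟨x₀, u⟩ = ⟨y₀, v⟩ = 0`,
`‖u‖ = ‖x₀‖`, `‖v‖ = ‖y₀‖`, `⟨x₀, v⟩ = ⟨u, y₀⟩ = J₀` and `⟨u, v⟩ = -⟨x₀, y₀⟩`, so the Gram matrix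
of `(x(t), y(t))` does not depend on `t`. Along the curve, Hamilton's equations therefore reduce
to the linear identities `‖x₀‖² v + ⟨x₀, y₀⟩ u = J₀ x₀` and `‖y₀‖² u + ⟨x₀, y₀⟩ v = J₀ y₀`.
-/

open Real

namespace AngularMomentumFlow

section Algebra

variable {E : Type*} [AddCommGroup E] [Module ℝ E]

/-- `∇_y J` at `(x, y)`, where `J` is the value of `√(B x x * B y y - B x y ^ 2)` at `(x, y)`;
since the flow keeps that value constant, it is passed as a parameter. -/
noncomputable def gradY (B : LinearMap.BilinForm ℝ E) (J : ℝ) (x y : E) : E :=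
  J⁻¹ • (B x x • y - B x y • x)

noncomputable def gradX (B : LinearMap.BilinForm ℝ E) (J : ℝ) (x y : E) : E :=
  J⁻¹ • (B y y • x - B x y • y)

noncomputable def flowX (B : LinearMap.BilinForm ℝ E) (J : ℝ) (x y : E) (t : ℝ) : E :=
  cos t • x + sin t • gradY B J x y

noncomputable def flowY (B : LinearMap.BilinForm ℝ E) (J : ℝ) (x y : E) (t : ℝ) : E :=
  cos t • y - sin t • gradX B J x y

variable {B : LinearMap.BilinForm ℝ E} {J : ℝ} {x y : E}

lemma apply_gradY_eq_zero : B x (gradY B J x y) = 0 := by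
  simp only [gradY, map_smul, map_sub, smul_eq_mul]; ring

lemma gradY_apply_eq_zero (hB : B.IsSymm) : B (gradY B J x y) x = 0 := by
  simp only [gradY, map_smul, map_sub, LinearMap.smul_apply, LinearMap.sub_apply, smul_eq_mul,
    hB.eq y x]
  ring

lemma gradY_apply_gradY (hB : B.IsSymm) (hJ : J ^ 2 = B x x * B y y - B x y ^ 2) (hJ0 : J ≠ 0) :
    B (gradY B J x y) (gradY B J x y) = B x x := by
  simp only [gradY, map_smul, map_sub, LinearMap.smul_apply, LinearMap.sub_apply, smul_eq_mul,
    hB.eq y x]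
  field_simp
  linear_combination (-B x x) * hJ

lemma gradY_apply_eq (hJ : J ^ 2 = B x x * B y y - B x y ^ 2) (hJ0 : J ≠ 0) :
    B (gradY B J x y) y = J := by
  simp only [gradY, map_smul, map_sub, LinearMap.smul_apply, LinearMap.sub_apply, smul_eq_mul]
  field_simp
  linear_combination -hJ

lemma gradX_apply_eq_zero : B (gradX B J x y) y = 0 := by
  simp only [gradX, map_smul, map_sub, LinearMap.smul_apply, LinearMap.sub_apply, smul_eq_mul]
  ring

lemma apply_gradX_eq_zero (hB : B.IsSymm) : B y (gradX B J x y) = 0 := by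
  simp only [gradX, map_smul, map_sub, smul_eq_mul,
    hB.eq y x]
  ring

lemma gradX_apply_gradX (hB : B.IsSymm) (hJ : J ^ 2 = B x x * B y y - B x y ^ 2) (hJ0 : J ≠ 0) :
    B (gradX B J x y) (gradX B J x y) = B y y := by
  simp only [gradX, map_smul, map_sub, LinearMap.smul_apply, LinearMap.sub_apply, smul_eq_mul,
    hB.eq y x]
  field_simp
  linear_combination (-B y y) * hJ

lemma apply_gradX_eq (hJ : J ^ 2 = B x x * B y y - B x y ^ 2) (hJ0 : J ≠ 0) :
    B x (gradX B J x y) = J := by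
  simp only [gradX, map_smul, map_sub, smul_eq_mul]
  field_simp
  linear_combination -hJ

lemma gradY_apply_gradX (hB : B.IsSymm) (hJ : J ^ 2 = B x x * B y y - B x y ^ 2) (hJ0 : J ≠ 0) :
    B (gradY B J x y) (gradX B J x y) = -B x y := by
  simp only [gradY, gradX, map_smul, map_sub, LinearMap.smul_apply, LinearMap.sub_apply,
    smul_eq_mul, hB.eq y x]
  field_simp
  linear_combination B x y * hJ

lemma smul_gradX_add_smul_gradY (hJ : J ^ 2 = B x x * B y y - B x y ^ 2) (hJ0 : J ≠ 0) :
    B x x • gradX B J x y + B x y • gradY B J x y = J • x := by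
  simp only [gradX, gradY]
  match_scalars
  · field_simp
    linear_combination -hJ
  · ring

lemma smul_gradY_add_smul_gradX (hJ : J ^ 2 = B x x * B y y - B x y ^ 2) (hJ0 : J ≠ 0) :
    B y y • gradY B J x y + B x y • gradX B J x y = J • y := by
  simp only [gradX, gradY]
  match_scalars
  · field_simp
    linear_combination -hJ
  · ring

lemma apply_cos_smul_add_sin_smul (t : ℝ) (x u y v : E) :
    B (cos t • x + sin t • u) (cos t • y + sin t • v) =
      cos t ^ 2 * B x y + cos t * sin t * (B x v + B u y) + sin t ^ 2 * B u v := by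
  simp only [map_add, map_smul, LinearMap.add_apply, LinearMap.smul_apply, smul_eq_mul]
  ring

lemma flowY_eq_add_neg (t : ℝ) : flowY B J x y t = cos t • y + sin t • -gradX B J x y := by
  rw [flowY, smul_neg, sub_eq_add_neg]

lemma flowX_apply_flowX (hB : B.IsSymm) (hJ : J ^ 2 = B x x * B y y - B x y ^ 2) (hJ0 : J ≠ 0)
    (t : ℝ) : B (flowX B J x y t) (flowX B J x y t) = B x x := by
  rw [flowX, apply_cos_smul_add_sin_smul, apply_gradY_eq_zero, gradY_apply_eq_zero hB,
    gradY_apply_gradY hB hJ hJ0]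
  linear_combination B x x * cos_sq_add_sin_sq t

lemma flowY_apply_flowY (hB : B.IsSymm) (hJ : J ^ 2 = B x x * B y y - B x y ^ 2) (hJ0 : J ≠ 0)
    (t : ℝ) : B (flowY B J x y t) (flowY B J x y t) = B y y := by
  rw [flowY_eq_add_neg, apply_cos_smul_add_sin_smul]
  simp only [map_neg, LinearMap.neg_apply, neg_neg, apply_gradX_eq_zero hB, gradX_apply_eq_zero,
    gradX_apply_gradX hB hJ hJ0]
  linear_combination B y y * cos_sq_add_sin_sq t

lemma flowX_apply_flowY (hB : B.IsSymm) (hJ : J ^ 2 = B x x * B y y - B x y ^ 2) (hJ0 : J ≠ 0)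
    (t : ℝ) : B (flowX B J x y t) (flowY B J x y t) = B x y := by
  rw [flowX, flowY_eq_add_neg, apply_cos_smul_add_sin_smul]
  simp only [map_neg, apply_gradX_eq hJ hJ0, gradY_apply_eq hJ hJ0,
    gradY_apply_gradX hB hJ hJ0]
  linear_combination B x y * cos_sq_add_sin_sq t

lemma gradY_flowX_flowY (hB : B.IsSymm) (hJ : J ^ 2 = B x x * B y y - B x y ^ 2) (hJ0 : J ≠ 0)
    (t : ℝ) :
    gradY B J (flowX B J x y t) (flowY B J x y t) = -sin t • x + cos t • gradY B J x y := by
  have key := calc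
      B x x • flowY B J x y t - B x y • flowX B J x y t
        = cos t • (B x x • y - B x y • x) -
            sin t • (B x x • gradX B J x y + B x y • gradY B J x y) := by
          simp only [flowX, flowY]; module
      _ = cos t • (J • gradY B J x y) - sin t • (J • x) := by
          rw [smul_gradX_add_smul_gradY hJ hJ0, gradY, smul_inv_smul₀ hJ0]
      _ = J • (-sin t • x + cos t • gradY B J x y) := by module
  rw [gradY, flowX_apply_flowX hB hJ hJ0, flowX_apply_flowY hB hJ hJ0, key, inv_smul_smul₀ hJ0]

lemma gradX_flowX_flowY (hB : B.IsSymm) (hJ : J ^ 2 = B x x * B y y - B x y ^ 2) (hJ0 : J ≠ 0)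
    (t : ℝ) :
    gradX B J (flowX B J x y t) (flowY B J x y t) = sin t • y + cos t • gradX B J x y := by
  have key := calc
      B y y • flowX B J x y t - B x y • flowY B J x y t
        = cos t • (B y y • x - B x y • y) +
            sin t • (B y y • gradY B J x y + B x y • gradX B J x y) := by
          simp only [flowX, flowY]; module
      _ = cos t • (J • gradX B J x y) + sin t • (J • y) := by
          rw [smul_gradY_add_smul_gradX hJ hJ0, gradX, smul_inv_smul₀ hJ0]
      _ = J • (sin t • y + cos t • gradX B J x y) := by module
  rw [gradX, flowY_apply_flowY hB hJ hJ0, flowX_apply_flowY hB hJ hJ0, key, inv_smul_smul₀ hJ0]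

lemma flowX_periodic : Function.Periodic (flowX B J x y) (2 * π) := fun t => by
  simp only [flowX, cos_add_two_pi, sin_add_two_pi]

lemma flowY_periodic : Function.Periodic (flowY B J x y) (2 * π) := fun t => by
  simp only [flowY, cos_add_two_pi, sin_add_two_pi]

end Algebra

section Analysis

variable {E : Type*} [NormedAddCommGroup E] [NormedSpace ℝ E] {B : LinearMap.BilinForm ℝ E}
  {J : ℝ} {x y : E}

lemma hasDerivAt_flowX (hB : B.IsSymm) (hJ : J ^ 2 = B x x * B y y - B x y ^ 2) (hJ0 : J ≠ 0)
    (t : ℝ) : HasDerivAt (flowX B J x y) (gradY B J (flowX B J x y t) (flowY B J x y t)) t := by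
  rw [gradY_flowX_flowY hB hJ hJ0]
  exact ((hasDerivAt_cos t).smul_const x).add ((hasDerivAt_sin t).smul_const _)

lemma hasDerivAt_flowY (hB : B.IsSymm) (hJ : J ^ 2 = B x x * B y y - B x y ^ 2) (hJ0 : J ≠ 0)
    (t : ℝ) : HasDerivAt (flowY B J x y) (-gradX B J (flowX B J x y t) (flowY B J x y t)) t := by
  rw [gradX_flowX_flowY hB hJ hJ0]
  exact (((hasDerivAt_cos t).smul_const y).sub
    ((hasDerivAt_sin t).smul_const (gradX B J x y))).congr_deriv (by module)

end Analysis

end AngularMomentumFlow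

open AngularMomentumFlow in
theorem stmt5_general (m : ℕ) (x₀ y₀ : Fin m → ℝ)
    (ip : (Fin m → ℝ) → (Fin m → ℝ) → ℝ)
    (hip : ip = fun u v => ∑ i, u i * v i)
    (W₀ : ℝ) (hW : W₀ = ip x₀ x₀ * ip y₀ y₀ - (ip x₀ y₀) ^ 2) (hpos : 0 < W₀)
    (J₀ : ℝ) (hJ : J₀ = Real.sqrt W₀)
    (X Y : ℝ → Fin m → ℝ)
    (hX : X = fun t => Real.cos t • x₀ +
      (Real.sin t / J₀) • (ip x₀ x₀ • y₀ - ip x₀ y₀ • x₀))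
    (hY : Y = fun t => Real.cos t • y₀ -
      (Real.sin t / J₀) • (ip y₀ y₀ • x₀ - ip x₀ y₀ • y₀)) :
    ∀ t : ℝ,
      (ip (X t) (X t) = ip x₀ x₀ ∧ ip (Y t) (Y t) = ip y₀ y₀ ∧
        ip (X t) (Y t) = ip x₀ y₀) ∧
      (HasDerivAt X (J₀⁻¹ • (ip (X t) (X t) • Y t - ip (X t) (Y t) • X t)) t ∧
        HasDerivAt Y (-(J₀⁻¹ • (ip (Y t) (Y t) • X t - ip (X t) (Y t) • Y t))) t) ∧
      (X (t + 2 * Real.pi) = X t ∧ Y (t + 2 * Real.pi) = Y t) := by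
  let B : LinearMap.BilinForm ℝ (Fin m → ℝ) := dotProductBilin ℝ ℝ
  have hB : B.IsSymm := ⟨dotProduct_comm⟩
  have hipB : ip = fun u v => B u v := hip
  have hJ0 : J₀ ≠ 0 := hJ ▸ (sqrt_pos.2 hpos).ne'
  have hJsq : J₀ ^ 2 = B x₀ x₀ * B y₀ y₀ - B x₀ y₀ ^ 2 := by rw [hJ, sq_sqrt hpos.le, hW, hipB]
  have hXflow : X = flowX B J₀ x₀ y₀ := by
    ext1 t; simp only [hX, hipB, flowX, gradY, div_eq_mul_inv, mul_smul]
  have hYflow : Y = flowY B J₀ x₀ y₀ := by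
    ext1 t; simp only [hY, hipB, flowY, gradX, div_eq_mul_inv, mul_smul]
  subst hipB hXflow hYflow
  intro t
  exact ⟨⟨flowX_apply_flowX hB hJsq hJ0 t, flowY_apply_flowY hB hJsq hJ0 t,
      flowX_apply_flowY hB hJsq hJ0 t⟩,
    ⟨hasDerivAt_flowX hB hJsq hJ0 t, hasDerivAt_flowY hB hJsq hJ0 t⟩,
    flowX_periodic t, flowY_periodic t⟩

/-- **The Hamiltonian flow of the total angular momentum `J` is explicit and 2π-periodic.**
Let `m ≥ 2`, `(x₀,y₀) ∈ ℝ^m × ℝ^m` with `W₀ = ‖x₀‖²‖y₀‖² − ⟨x₀,y₀⟩² > 0` and `J₀ = √W₀`.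
With `X t = cos t • x₀ + (sin t / J₀) • (‖x₀‖² • y₀ − ⟨x₀,y₀⟩ • x₀)` and
`Y t = cos t • y₀ − (sin t / J₀) • (‖y₀‖² • x₀ − ⟨x₀,y₀⟩ • y₀)` we have, for every `t`:
(i) the invariants `‖X t‖², ‖Y t‖², ⟨X t, Y t⟩` are constant;
(ii) the curve solves Hamilton's equations `ẋ = ∇_y J`, `ẏ = −∇_x J` for
`J = √(‖x‖²‖y‖² − ⟨x,y⟩²)`;
(iii) the curve is `2π`-periodic. -/
theorem stmt5 (m : ℕ) (hm : 2 ≤ m) (x₀ y₀ : Fin m → ℝ)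
    (ip : (Fin m → ℝ) → (Fin m → ℝ) → ℝ)
    (hip : ip = fun u v => ∑ i, u i * v i)
    (W₀ : ℝ) (hW : W₀ = ip x₀ x₀ * ip y₀ y₀ - (ip x₀ y₀) ^ 2) (hpos : 0 < W₀)
    (J₀ : ℝ) (hJ : J₀ = Real.sqrt W₀)
    (X Y : ℝ → Fin m → ℝ)
    (hX : X = fun t => Real.cos t • x₀ +
      (Real.sin t / J₀) • (ip x₀ x₀ • y₀ - ip x₀ y₀ • x₀))
    (hY : Y = fun t => Real.cos t • y₀ -
      (Real.sin t / J₀) • (ip y₀ y₀ • x₀ - ip x₀ y₀ • y₀)) :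
    ∀ t : ℝ,
      (ip (X t) (X t) = ip x₀ x₀ ∧ ip (Y t) (Y t) = ip y₀ y₀ ∧
        ip (X t) (Y t) = ip x₀ y₀) ∧
      (HasDerivAt X (J₀⁻¹ • (ip (X t) (X t) • Y t - ip (X t) (Y t) • X t)) t ∧
        HasDerivAt Y (-(J₀⁻¹ • (ip (Y t) (Y t) • X t - ip (X t) (Y t) • Y t))) t) ∧
      (X (t + 2 * Real.pi) = X t ∧ Y (t + 2 * Real.pi) = Y t) :=
  stmt5_general m x₀ y₀ ip hip W₀ hW hpos J₀ hJ X Y hX hY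
end

section
/- Hamilton's equations for the Dirac bracket reproduce Newton's constrained equations on the sphere: let V : ℝ^{n+1} → ℝ be continuously differentiable and H(x,y) = ½⟨y,y⟩ + V(x). Then at every point (x,y) with ⟨x,x⟩ = 1 and ⟨x,y⟩ = 0, the Dirac brackets satisfy, for every index ν, {x_ν, H} = y_ν and {y_ν, H} = −∂V/∂x_ν(x) + (⟨x, ∇V(x)⟩ − ⟨y,y⟩)·x_ν. -/
/-! The canonical bracket of a coordinate with any function is a partial derivative, and the
brackets of the constraints with any function are explicit combinations of partial derivatives.
Hence every bracket in the Dirac formula is computed from the gradients of `C1`, `C2` and `H`.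
On the constraint set `[C1, H] = 2⟨x, y⟩` vanishes, which removes one correction term; the other,
`[y_ν, C1] [C2, H] / 2 = -x_ν (|y|² - ⟨x, ∇V⟩)`, is the normal force keeping the particle on the
sphere. -/

noncomputable section

/-- The canonical Poisson bracket on `T*ℝ^N = ℝ^N × ℝ^N`:
`[f,g] = ∑ ν (∂f/∂x_ν · ∂g/∂y_ν − ∂f/∂y_ν · ∂g/∂x_ν)`. -/
def canPB {N : ℕ} (f g : (Fin N → ℝ) × (Fin N → ℝ) → ℝ)
    (p : (Fin N → ℝ) × (Fin N → ℝ)) : ℝ :=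
  ∑ i : Fin N,
    ((fderiv ℝ f p) ((Pi.single i 1 : Fin N → ℝ), 0) *
        (fderiv ℝ g p) (0, (Pi.single i 1 : Fin N → ℝ))
      - (fderiv ℝ f p) (0, (Pi.single i 1 : Fin N → ℝ)) *
        (fderiv ℝ g p) ((Pi.single i 1 : Fin N → ℝ), 0))

/-- The constraint function `C1(x,y) = ⟨x,x⟩`. -/
def C1fun {N : ℕ} (p : (Fin N → ℝ) × (Fin N → ℝ)) : ℝ := ∑ ν, p.1 ν * p.1 ν

/-- The constraint function `C2(x,y) = ⟨x,y⟩`. -/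
def C2fun {N : ℕ} (p : (Fin N → ℝ) × (Fin N → ℝ)) : ℝ := ∑ ν, p.1 ν * p.2 ν

/-- The Dirac bracket
`{f,g} = [f,g] + (1/(2C1))·[f,C1]·[C2,g] − (1/(2C1))·[f,C2]·[C1,g]`. -/
def diracPB {N : ℕ} (f g : (Fin N → ℝ) × (Fin N → ℝ) → ℝ)
    (p : (Fin N → ℝ) × (Fin N → ℝ)) : ℝ :=
  canPB f g p + (1 / (2 * C1fun p)) * canPB f C1fun p * canPB C2fun g p
    - (1 / (2 * C1fun p)) * canPB f C2fun p * canPB C1fun g p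

section PhaseSpace

variable {N : ℕ}

theorem hasFDerivAt_fst_apply (ν : Fin N) (p : (Fin N → ℝ) × (Fin N → ℝ)) :
    HasFDerivAt (fun q : (Fin N → ℝ) × (Fin N → ℝ) => q.1 ν)
      ((ContinuousLinearMap.proj ν).comp (ContinuousLinearMap.fst ℝ _ _)) p :=
  (hasFDerivAt_apply ν p.1).comp p hasFDerivAt_fst (g := fun x : Fin N → ℝ => x ν)

theorem hasFDerivAt_snd_apply (ν : Fin N) (p : (Fin N → ℝ) × (Fin N → ℝ)) :
    HasFDerivAt (fun q : (Fin N → ℝ) × (Fin N → ℝ) => q.2 ν)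
      ((ContinuousLinearMap.proj ν).comp (ContinuousLinearMap.snd ℝ _ _)) p :=
  (hasFDerivAt_apply ν p.2).comp p hasFDerivAt_snd (g := fun x : Fin N → ℝ => x ν)

theorem canPB_fst_apply_left (ν : Fin N) (g : (Fin N → ℝ) × (Fin N → ℝ) → ℝ)
    (p : (Fin N → ℝ) × (Fin N → ℝ)) :
    canPB (fun q => q.1 ν) g p = fderiv ℝ g p (0, Pi.single ν 1) := by
  simp [canPB, (hasFDerivAt_fst_apply ν p).fderiv, Pi.single_apply]

theorem canPB_snd_apply_left (ν : Fin N) (g : (Fin N → ℝ) × (Fin N → ℝ) → ℝ)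
    (p : (Fin N → ℝ) × (Fin N → ℝ)) :
    canPB (fun q => q.2 ν) g p = -fderiv ℝ g p (Pi.single ν 1, 0) := by
  simp [canPB, (hasFDerivAt_snd_apply ν p).fderiv, Pi.single_apply]

theorem fderiv_C1fun_apply (p v : (Fin N → ℝ) × (Fin N → ℝ)) :
    fderiv ℝ C1fun p v = 2 * ∑ i, p.1 i * v.1 i := by
  have h : HasFDerivAt C1fun _ p := HasFDerivAt.fun_sum (u := Finset.univ) fun i _ =>
    (hasFDerivAt_fst_apply i p).fun_mul (hasFDerivAt_fst_apply i p)
  rw [h.fderiv]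
  simp [Finset.mul_sum, two_mul]

theorem fderiv_C2fun_apply (p v : (Fin N → ℝ) × (Fin N → ℝ)) :
    fderiv ℝ C2fun p v = ∑ i, (p.1 i * v.2 i + p.2 i * v.1 i) := by
  have h : HasFDerivAt C2fun _ p := HasFDerivAt.fun_sum (u := Finset.univ) fun i _ =>
    (hasFDerivAt_fst_apply i p).fun_mul (hasFDerivAt_snd_apply i p)
  rw [h.fderiv]
  simp

theorem canPB_fst_apply_C1fun (ν : Fin N) (p : (Fin N → ℝ) × (Fin N → ℝ)) :
    canPB (fun q => q.1 ν) C1fun p = 0 := by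
  simp [canPB_fst_apply_left, fderiv_C1fun_apply]

theorem canPB_snd_apply_C1fun (ν : Fin N) (p : (Fin N → ℝ) × (Fin N → ℝ)) :
    canPB (fun q => q.2 ν) C1fun p = -(2 * p.1 ν) := by
  simp [canPB_snd_apply_left, fderiv_C1fun_apply, Pi.single_apply]

theorem canPB_snd_apply_C2fun (ν : Fin N) (p : (Fin N → ℝ) × (Fin N → ℝ)) :
    canPB (fun q => q.2 ν) C2fun p = -p.2 ν := by
  simp [canPB_snd_apply_left, fderiv_C2fun_apply, Pi.single_apply]

theorem canPB_C1fun_left (g : (Fin N → ℝ) × (Fin N → ℝ) → ℝ) (p : (Fin N → ℝ) × (Fin N → ℝ)) :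
    canPB C1fun g p = 2 * ∑ i, p.1 i * fderiv ℝ g p (0, Pi.single i 1) := by
  simp [canPB, fderiv_C1fun_apply, Pi.single_apply, Finset.mul_sum, mul_assoc]

theorem canPB_C2fun_left (g : (Fin N → ℝ) × (Fin N → ℝ) → ℝ) (p : (Fin N → ℝ) × (Fin N → ℝ)) :
    canPB C2fun g p
      = ∑ i, (p.2 i * fderiv ℝ g p (0, Pi.single i 1) - p.1 i * fderiv ℝ g p (Pi.single i 1, 0)) := by
  simp [canPB, fderiv_C2fun_apply, Pi.single_apply]

theorem fderiv_kinetic_add_potential_apply {V : (Fin N → ℝ) → ℝ}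
    {p : (Fin N → ℝ) × (Fin N → ℝ)} (hV : DifferentiableAt ℝ V p.1)
    (v : (Fin N → ℝ) × (Fin N → ℝ)) :
    fderiv ℝ (fun q : (Fin N → ℝ) × (Fin N → ℝ) => (1 / 2) * (∑ μ, q.2 μ * q.2 μ) + V q.1) p v
      = ∑ i, p.2 i * v.2 i + fderiv ℝ V p.1 v.1 := by
  have h : HasFDerivAt
      (fun q : (Fin N → ℝ) × (Fin N → ℝ) => (1 / 2) * (∑ μ, q.2 μ * q.2 μ) + V q.1) _ p :=
    ((HasFDerivAt.fun_sum (u := Finset.univ) fun i _ =>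
      (hasFDerivAt_snd_apply i p).fun_mul (hasFDerivAt_snd_apply i p)).const_mul (1 / 2)).fun_add
      (hV.hasFDerivAt.comp p hasFDerivAt_fst)
  rw [h.fderiv]
  simp [Finset.mul_sum, ← two_mul]

end PhaseSpace

/-- **Hamilton's equations for the Dirac bracket reproduce Newton's constrained equations
on the sphere.**  For a `C¹` potential `V : ℝ^{n+1} → ℝ` and `H(x,y) = ½⟨y,y⟩ + V(x)`,
at every point with `⟨x,x⟩ = 1` and `⟨x,y⟩ = 0` the Dirac brackets satisfy
`{x_ν, H} = y_ν` and `{y_ν, H} = −∂V/∂x_ν(x) + (⟨x,∇V(x)⟩ − ⟨y,y⟩)·x_ν`. -/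
theorem stmt8 (n : ℕ) (V : (Fin (n + 1) → ℝ) → ℝ) (hV : ContDiff ℝ 1 V)
    (H : (Fin (n + 1) → ℝ) × (Fin (n + 1) → ℝ) → ℝ)
    (hH : H = fun q => (1 / 2) * (∑ μ, q.2 μ * q.2 μ) + V q.1)
    (p : (Fin (n + 1) → ℝ) × (Fin (n + 1) → ℝ))
    (h1 : ∑ ν, p.1 ν * p.1 ν = 1) (h2 : ∑ ν, p.1 ν * p.2 ν = 0) (ν : Fin (n + 1)) :
    diracPB (fun q => q.1 ν) H p = p.2 ν ∧
    diracPB (fun q => q.2 ν) H p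
      = -(fderiv ℝ V p.1 (Pi.single ν 1))
        + ((∑ μ, p.1 μ * fderiv ℝ V p.1 (Pi.single μ 1)) - ∑ μ, p.2 μ * p.2 μ) * p.1 ν := by
  have hH' : ∀ v, fderiv ℝ H p v = ∑ i, p.2 i * v.2 i + fderiv ℝ V p.1 v.1 := by
    subst hH
    exact fderiv_kinetic_add_potential_apply (hV.differentiable one_ne_zero p.1)
  have hC1 : C1fun p = 1 := h1
  have hC1H : canPB C1fun H p = 0 := by
    simp [canPB_C1fun_left, hH', Pi.single_apply, h2]
  have hC2H : canPB C2fun H p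
      = ∑ μ, p.2 μ * p.2 μ - ∑ μ, p.1 μ * fderiv ℝ V p.1 (Pi.single μ 1) := by
    simp [canPB_C2fun_left, hH', Pi.single_apply, Finset.sum_sub_distrib]
  have hxH : canPB (fun q => q.1 ν) H p = p.2 ν := by
    simp [canPB_fst_apply_left, hH', Pi.single_apply]
  have hyH : canPB (fun q => q.2 ν) H p = -fderiv ℝ V p.1 (Pi.single ν 1) := by
    simp [canPB_snd_apply_left, hH']
  constructor
  · rw [diracPB, hxH, canPB_fst_apply_C1fun, hC1H]
    ring
  · rw [diracPB, hyH, canPB_snd_apply_C1fun, canPB_snd_apply_C2fun, hC1H, hC2H, hC1]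
    ring
end
end

section
/- The degenerate integrals are limits of the Uhlenbeck integrals: fix (x,y) ∈ ℝ^{n+1} × ℝ^{n+1} and let ā ∈ ℝ^{n+1} be the vector with ā_ν = b_σ for every ν ∈ I_σ. For a ∈ ℝ^{n+1} with pairwise distinct entries define the Uhlenbeck integrals F̃_ν(a) = x_ν² + ∑_{μ≠ν} L_{νμ}²/(a_ν − a_μ). Then for each σ ∈ {0,…,ℓ}, the function a ↦ ∑_{k∈I_σ} F̃_k(a) tends to F_σ(x,y) as a tends to ā within the set of vectors in ℝ^{n+1} having pairwise distinct entries. -/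
noncomputable section

open scoped Classical

/-- The angular momentum component `L_{νκ}(x,y) = x_ν y_κ − x_κ y_ν`. -/
def Lfun {N : ℕ} (ν κ : Fin N) (p : (Fin N → ℝ) × (Fin N → ℝ)) : ℝ :=
  p.1 ν * p.2 κ - p.1 κ * p.2 ν

/-- The integral `F_σ = ∑_{i∈I_σ} x_i² + ∑_{τ≠σ} ∑_{k∈I_σ} ∑_{l∈I_τ} L_{kl}²/(b_σ − b_τ)`
of the degenerate Neumann system, where `I_σ = {ν : a_ν = b_σ}`. -/
def Fint {n ℓ : ℕ} (a : Fin (n + 1) → ℝ) (b : Fin (ℓ + 1) → ℝ) (σ : Fin (ℓ + 1))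
    (p : (Fin (n + 1) → ℝ) × (Fin (n + 1) → ℝ)) : ℝ :=
  (∑ i : Fin (n + 1), if a i = b σ then (p.1 i) ^ 2 else 0)
    + ∑ τ : Fin (ℓ + 1), if τ ≠ σ then
        ∑ k : Fin (n + 1), ∑ l : Fin (n + 1),
          (if a k = b σ ∧ a l = b τ then (Lfun k l p) ^ 2 / (b σ - b τ) else 0)
      else 0

/-- The Uhlenbeck integral `F̃_ν(c) = x_ν² + ∑_{μ≠ν} L_{νμ}²/(c_ν − c_μ)` for a vector `c`
of pairwise distinct coefficients. -/
def uhlenbeck {n : ℕ} (p : (Fin (n + 1) → ℝ) × (Fin (n + 1) → ℝ))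
    (ν : Fin (n + 1)) (c : Fin (n + 1) → ℝ) : ℝ :=
  (p.1 ν) ^ 2 + ∑ μ : Fin (n + 1), if μ ≠ ν then (Lfun ν μ p) ^ 2 / (c ν - c μ) else 0

/-- **The degenerate integrals are limits of the Uhlenbeck integrals.**
For fixed `(x,y)`, the function `c ↦ ∑_{k∈I_σ} F̃_k(c)` tends to `F_σ(x,y)` as `c` tends
to the degenerate coefficient vector `a` (with `a_ν = b_σ` for `ν ∈ I_σ`) within the set
of vectors with pairwise distinct entries. -/
theorem stmt11 (n ℓ : ℕ) (a : Fin (n + 1) → ℝ) (b : Fin (ℓ + 1) → ℝ)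
    (hb : StrictMono b)
    (hab : ∀ ν, ∃ σ, a ν = b σ) (hba : ∀ σ, ∃ ν, a ν = b σ)
    (p : (Fin (n + 1) → ℝ) × (Fin (n + 1) → ℝ)) (σ : Fin (ℓ + 1)) :
    Filter.Tendsto
      (fun c : Fin (n + 1) → ℝ =>
        ∑ k : Fin (n + 1), if a k = b σ then uhlenbeck p k c else 0)
      (nhdsWithin a {c : Fin (n + 1) → ℝ | Function.Injective c})
      (nhds (Fint a b σ p)) := by
  have hbinj : Function.Injective b := hb.injective
  set C : ℝ := ∑ i : Fin (n+1), if a i = b σ then (p.1 i)^2 else 0 with hC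
  -- Step 1: rewrite the function as C + cross-block sum, for every c.
  have key : ∀ c : Fin (n+1) → ℝ,
      (∑ k : Fin (n+1), if a k = b σ then uhlenbeck p k c else 0)
      = C + ∑ k : Fin (n+1), ∑ μ : Fin (n+1),
          (if a k = b σ ∧ ¬ (a μ = b σ) then (Lfun k μ p)^2 / (c k - c μ) else 0) := by
    intro c
    have h1 : ∀ k : Fin (n+1),
        (if a k = b σ then uhlenbeck p k c else 0)
        = (if a k = b σ then (p.1 k)^2 else 0)
          + ∑ μ : Fin (n+1), (if a k = b σ ∧ μ ≠ k then (Lfun k μ p)^2 / (c k - c μ) else 0) := by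
      intro k
      by_cases h : a k = b σ
      · simp [uhlenbeck, h]
      · simp [h]
    rw [Finset.sum_congr rfl (fun k _ => h1 k), Finset.sum_add_distrib]
    congr 1
    have h2 : ∀ k μ : Fin (n+1),
        (if a k = b σ ∧ μ ≠ k then (Lfun k μ p)^2 / (c k - c μ) else 0)
        = (if a k = b σ ∧ μ ≠ k ∧ a μ = b σ then (Lfun k μ p)^2 / (c k - c μ) else 0)
          + (if a k = b σ ∧ ¬ (a μ = b σ) then (Lfun k μ p)^2 / (c k - c μ) else 0) := by
      intro k μ
      by_cases hk : a k = b σ <;> by_cases hμ : a μ = b σ <;> by_cases hkμ : μ = k <;>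
        simp_all
    rw [Finset.sum_congr rfl (fun k _ => Finset.sum_congr rfl (fun μ _ => h2 k μ))]
    have h3 : (∑ k : Fin (n+1), ∑ μ : Fin (n+1),
        (if a k = b σ ∧ μ ≠ k ∧ a μ = b σ then (Lfun k μ p)^2 / (c k - c μ) else 0)) = 0 := by
      set f : Fin (n+1) → Fin (n+1) → ℝ := fun k μ =>
        if a k = b σ ∧ μ ≠ k ∧ a μ = b σ then (Lfun k μ p)^2 / (c k - c μ) else 0 with hf
      have hanti : ∀ k μ, f k μ = - f μ k := by
        intro k μ
        simp only [hf]
        by_cases hk : a k = b σ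
        · by_cases hμ : a μ = b σ
          · by_cases hkμ : μ = k
            · subst hkμ; simp
            · rw [if_pos ⟨hk, hkμ, hμ⟩, if_pos ⟨hμ, fun h => hkμ h.symm, hk⟩]
              have e1 : (Lfun μ k p)^2 = (Lfun k μ p)^2 := by simp only [Lfun]; ring
              rw [e1, show c μ - c k = -(c k - c μ) by ring, div_neg, neg_neg]
          · rw [if_neg (by tauto), if_neg (by tauto)]; simp
        · rw [if_neg (by tauto), if_neg (by tauto)]; simp
      have h4 : (∑ k : Fin (n+1), ∑ μ : Fin (n+1), f k μ)
          = - (∑ k : Fin (n+1), ∑ μ : Fin (n+1), f k μ) := by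
        calc (∑ k : Fin (n+1), ∑ μ : Fin (n+1), f k μ)
            = ∑ k : Fin (n+1), ∑ μ : Fin (n+1), (- f μ k) :=
              Finset.sum_congr rfl fun k _ => Finset.sum_congr rfl fun μ _ => hanti k μ
          _ = - ∑ k : Fin (n+1), ∑ μ : Fin (n+1), f μ k := by
              simp [Finset.sum_neg_distrib]
          _ = - ∑ k : Fin (n+1), ∑ μ : Fin (n+1), f k μ := by rw [Finset.sum_comm]
      linarith
    simp only [Finset.sum_add_distrib, h3, zero_add]
  -- Step 2: the limit value.
  have hval : C + (∑ k : Fin (n+1), ∑ μ : Fin (n+1),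
      (if a k = b σ ∧ ¬ (a μ = b σ) then (Lfun k μ p)^2 / (a k - a μ) else 0))
      = Fint a b σ p := by
    unfold Fint
    congr 1
    have h5 : ∀ τ : Fin (ℓ+1),
        (if τ ≠ σ then ∑ k : Fin (n+1), ∑ l : Fin (n+1),
          (if a k = b σ ∧ a l = b τ then (Lfun k l p) ^ 2 / (b σ - b τ) else 0) else 0)
        = ∑ k : Fin (n+1), ∑ l : Fin (n+1),
          (if τ ≠ σ ∧ a k = b σ ∧ a l = b τ then (Lfun k l p) ^ 2 / (b σ - b τ) else 0) := by
      intro τ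
      by_cases h : τ ≠ σ
      · simp [h]
      · simp [h]
    rw [Finset.sum_congr rfl (fun τ _ => h5 τ)]
    conv_rhs => rw [Finset.sum_comm]
    refine Finset.sum_congr rfl fun k _ => ?_
    conv_rhs => rw [Finset.sum_comm]
    refine Finset.sum_congr rfl fun l _ => ?_
    obtain ⟨τ₀, hτ₀⟩ := hab l
    rw [Finset.sum_eq_single τ₀]
    · by_cases hk : a k = b σ
      · by_cases hl : a l = b σ
        · have : τ₀ = σ := hbinj (hτ₀.symm.trans hl)
          simp [this, hl]
        · have hτσ : τ₀ ≠ σ := fun e => hl (hτ₀.trans (by rw [e]))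
          rw [if_pos ⟨hk, hl⟩, if_pos ⟨hτσ, hk, hτ₀⟩, hk, hτ₀]
      · simp [hk]
    · intro τ _ hττ₀
      rw [if_neg]
      rintro ⟨-, -, hlτ⟩
      exact hττ₀ (hbinj (hlτ.symm.trans hτ₀).symm).symm
    · intro h; exact absurd (Finset.mem_univ τ₀) h
  -- Step 3: continuity.
  have hcont : Filter.Tendsto
      (fun c : Fin (n+1) → ℝ => C + ∑ k : Fin (n+1), ∑ μ : Fin (n+1),
        (if a k = b σ ∧ ¬ (a μ = b σ) then (Lfun k μ p)^2 / (c k - c μ) else 0))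
      (nhds a) (nhds (Fint a b σ p)) := by
    rw [← hval]
    refine Filter.Tendsto.const_add C ?_
    refine tendsto_finset_sum _ fun k _ => tendsto_finset_sum _ fun μ _ => ?_
    by_cases h : a k = b σ ∧ ¬ (a μ = b σ)
    · simp only [if_pos h]
      have hne : a k - a μ ≠ 0 := by
        obtain ⟨τ, hτ⟩ := hab μ
        have hτσ : b σ ≠ b τ := fun e => h.2 (hτ.trans e.symm)
        rw [h.1, hτ]
        exact sub_ne_zero.mpr hτσ
      exact Filter.Tendsto.div tendsto_const_nhds
        (((continuous_apply k).tendsto a).sub ((continuous_apply μ).tendsto a)) hne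
    · simp only [if_neg h]
      exact tendsto_const_nhds
  have hfun : (fun c : Fin (n+1) → ℝ =>
      ∑ k : Fin (n+1), if a k = b σ then uhlenbeck p k c else 0)
      = fun c => C + ∑ k : Fin (n+1), ∑ μ : Fin (n+1),
        (if a k = b σ ∧ ¬ (a μ = b σ) then (Lfun k μ p)^2 / (c k - c μ) else 0) :=
    funext key
  rw [hfun]
  exact hcont.mono_left nhdsWithin_le_nhds
end
end

section
/- The regular reduction map is a Poisson map: let I_0,…,I_ℓ be a partition of {0,…,n} and let P_σ denote the orthogonal projection of ℝ^{n+1} onto the coordinates with indices in I_σ. At every point (x,y) ∈ ℝ^{n+1} × ℝ^{n+1} with P_σ x ≠ 0 for all σ (so in particular C1 = ⟨x,x⟩ ≠ 0), the functions ξ_σ = ‖P_σ x‖ and η_σ = ⟨P_σ x, P_σ y⟩/‖P_σ x‖ satisfy the Dirac bracket relations {ξ_σ, ξ_τ} = 0, {ξ_σ, η_τ} = δ_{στ} − ξ_σ·ξ_τ/C1, and {η_σ, η_τ} = (ξ_τ·η_σ − ξ_σ·η_τ)/C1, for all σ, τ ∈ {0,…,ℓ}. -/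
noncomputable section

open scoped Classical

/-- The orthogonal projection `P_σ` of `ℝ^{n+1}` onto the coordinates with indices in the
block `I_σ = part⁻¹(σ)` of the partition. -/
def Pproj {n ℓ : ℕ} (part : Fin (n + 1) → Fin (ℓ + 1)) (σ : Fin (ℓ + 1))
    (x : Fin (n + 1) → ℝ) : Fin (n + 1) → ℝ :=
  fun i => if part i = σ then x i else 0

/-- `ξ_σ = ‖P_σ x‖` (Euclidean norm). -/
def xiFun {n ℓ : ℕ} (part : Fin (n + 1) → Fin (ℓ + 1)) (σ : Fin (ℓ + 1))
    (p : (Fin (n + 1) → ℝ) × (Fin (n + 1) → ℝ)) : ℝ :=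
  Real.sqrt (∑ i, Pproj part σ p.1 i * Pproj part σ p.1 i)

/-- `η_σ = ⟨P_σ x, P_σ y⟩ / ‖P_σ x‖`. -/
def etaFun {n ℓ : ℕ} (part : Fin (n + 1) → Fin (ℓ + 1)) (σ : Fin (ℓ + 1))
    (p : (Fin (n + 1) → ℝ) × (Fin (n + 1) → ℝ)) : ℝ :=
  (∑ i, Pproj part σ p.1 i * Pproj part σ p.2 i) / xiFun part σ p

/-!
The canonical bracket depends only on the differentials, through the constant Poisson tensor
`poissonTensor` on covectors. Every function in the statement is built from the block invariants
`Q_σ = ‖P_σ x‖²` and `B_σ = ⟨P_σ x, P_σ y⟩`: `ξ_σ = √Q_σ`, `η_σ = B_σ / ξ_σ`, `C1 = ∑ Q_σ`,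
`C2 = ∑ B_σ`. Since distinct blocks are orthogonal, `[Q_σ, Q_τ] = [B_σ, B_τ] = 0` and
`[Q_σ, B_τ] = 2 δ_{στ} Q_σ`. The chain and quotient rules express `dξ_σ` and `dη_σ` in terms of
`dQ_σ` and `dB_σ`, so bilinearity gives all canonical brackets of `ξ, η, C1, C2`, and the Dirac
brackets follow by algebra.
-/

open Finset

def poissonTensor (N : ℕ) :
    ((Fin N → ℝ) × (Fin N → ℝ) →L[ℝ] ℝ) →ₗ[ℝ] ((Fin N → ℝ) × (Fin N → ℝ) →L[ℝ] ℝ) →ₗ[ℝ] ℝ :=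
  LinearMap.mk₂ ℝ
    (fun L M => ∑ i : Fin N,
      (L (Pi.single i 1, 0) * M (0, Pi.single i 1) - L (0, Pi.single i 1) * M (Pi.single i 1, 0)))
    (fun _ _ _ => by
      simp only [add_apply, ← sum_add_distrib]
      exact sum_congr rfl fun _ _ => by ring)
    (fun _ _ _ => by
      simp only [smul_apply, smul_eq_mul, mul_sum]
      exact sum_congr rfl fun _ _ => by ring)
    (fun _ _ _ => by
      simp only [add_apply, ← sum_add_distrib]
      exact sum_congr rfl fun _ _ => by ring)
    (fun _ _ _ => by
      simp only [smul_apply, smul_eq_mul, mul_sum]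
      exact sum_congr rfl fun _ _ => by ring)

theorem canPB_eq_poissonTensor {N : ℕ} (f g : (Fin N → ℝ) × (Fin N → ℝ) → ℝ)
    (p : (Fin N → ℝ) × (Fin N → ℝ)) :
    canPB f g p = poissonTensor N (fderiv ℝ f p) (fderiv ℝ g p) :=
  rfl

theorem poissonTensor_swap {N : ℕ} (L M : (Fin N → ℝ) × (Fin N → ℝ) →L[ℝ] ℝ) :
    poissonTensor N M L = -poissonTensor N L M := by
  simp only [poissonTensor, LinearMap.mk₂_apply, ← sum_neg_distrib]
  exact sum_congr rfl fun _ _ => by ring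

theorem canPB_swap {N : ℕ} (f g : (Fin N → ℝ) × (Fin N → ℝ) → ℝ)
    (p : (Fin N → ℝ) × (Fin N → ℝ)) : canPB g f p = -canPB f g p :=
  poissonTensor_swap _ _

theorem hasFDerivAt_sum_mul {E ι : Type*} [NormedAddCommGroup E] [NormedSpace ℝ E] [Fintype ι]
    (L M : E →L[ℝ] (ι → ℝ)) (p : E) :
    HasFDerivAt (fun q => ∑ i, L q i * M q i)
      (∑ i, (L p i • (ContinuousLinearMap.proj i ∘L M)
        + M p i • (ContinuousLinearMap.proj i ∘L L))) p :=
  HasFDerivAt.fun_sum fun i _ =>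
    (ContinuousLinearMap.proj i ∘L L).hasFDerivAt.mul
      (ContinuousLinearMap.proj i ∘L M).hasFDerivAt

theorem fderiv_sum_mul_apply {E ι : Type*} [NormedAddCommGroup E] [NormedSpace ℝ E] [Fintype ι]
    (L M : E →L[ℝ] (ι → ℝ)) (p v : E) :
    fderiv ℝ (fun q => ∑ i, L q i * M q i) p v = ∑ i, (L p i * M v i + M p i * L v i) := by
  simp [(hasFDerivAt_sum_mul L M p).fderiv]

section Blocks

variable {n ℓ : ℕ} (part : Fin (n + 1) → Fin (ℓ + 1))

def blockNormSq (σ : Fin (ℓ + 1)) (q : (Fin (n + 1) → ℝ) × (Fin (n + 1) → ℝ)) : ℝ :=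
  ∑ i, Pproj part σ q.1 i * Pproj part σ q.1 i

def blockInner (σ : Fin (ℓ + 1)) (q : (Fin (n + 1) → ℝ) × (Fin (n + 1) → ℝ)) : ℝ :=
  ∑ i, Pproj part σ q.1 i * Pproj part σ q.2 i

def blockProj (σ : Fin (ℓ + 1)) : (Fin (n + 1) → ℝ) →L[ℝ] (Fin (n + 1) → ℝ) :=
  ContinuousLinearMap.pi fun i => if part i = σ then ContinuousLinearMap.proj i else 0

theorem blockProj_apply (σ : Fin (ℓ + 1)) (x : Fin (n + 1) → ℝ) :
    blockProj part σ x = Pproj part σ x := by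
  ext i
  by_cases h : part i = σ <;> simp [blockProj, Pproj, h]

@[simp]
theorem Pproj_zero (σ : Fin (ℓ + 1)) : Pproj part σ (0 : Fin (n + 1) → ℝ) = 0 := by
  ext i
  simp [Pproj]

theorem sum_Pproj_mul_Pproj (σ τ : Fin (ℓ + 1)) (x y : Fin (n + 1) → ℝ) :
    ∑ i, Pproj part σ x i * Pproj part τ y i
      = if σ = τ then ∑ i, Pproj part σ x i * Pproj part σ y i else 0 := by
  split_ifs with h
  · rw [h]
  · refine sum_eq_zero fun i _ => ?_
    unfold Pproj
    split_ifs with hσ hτ <;> simp_all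

theorem sum_Pproj_single_mul (σ : Fin (ℓ + 1)) (j : Fin (n + 1)) (y : Fin (n + 1) → ℝ) :
    ∑ i, Pproj part σ (Pi.single j 1) i * Pproj part σ y i = Pproj part σ y j := by
  rw [Fintype.sum_eq_single j fun i hi => by simp [Pproj, hi]]
  by_cases h : part j = σ <;> simp [Pproj, h]

theorem sum_Pproj_mul_Pproj_eq_mul (x y : Fin (n + 1) → ℝ) (i : Fin (n + 1)) :
    ∑ σ, Pproj part σ x i * Pproj part σ y i = x i * y i := by
  simp [Pproj]

theorem sum_blockNormSq : ∑ σ, blockNormSq part σ = C1fun := by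
  ext q
  simp only [Finset.sum_apply, blockNormSq, C1fun]
  rw [sum_comm]
  exact sum_congr rfl fun i _ => sum_Pproj_mul_Pproj_eq_mul part _ _ i

theorem sum_blockInner : ∑ σ, blockInner part σ = C2fun := by
  ext q
  simp only [Finset.sum_apply, blockInner, C2fun]
  rw [sum_comm]
  exact sum_congr rfl fun i _ => sum_Pproj_mul_Pproj_eq_mul part _ _ i

variable (σ : Fin (ℓ + 1)) (p : (Fin (n + 1) → ℝ) × (Fin (n + 1) → ℝ))

theorem blockNormSq_eq_sum_mul :
    blockNormSq part σ = fun q =>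
      ∑ i, (blockProj part σ ∘L .fst ℝ _ _) q i
        * (blockProj part σ ∘L .fst ℝ _ _) q i := by
  ext q
  simp [blockNormSq, blockProj_apply]

theorem blockInner_eq_sum_mul :
    blockInner part σ = fun q =>
      ∑ i, (blockProj part σ ∘L .fst ℝ _ _) q i
        * (blockProj part σ ∘L .snd ℝ _ _) q i := by
  ext q
  simp [blockInner, blockProj_apply]

theorem differentiableAt_blockNormSq : DifferentiableAt ℝ (blockNormSq part σ) p := by
  rw [blockNormSq_eq_sum_mul]
  exact (hasFDerivAt_sum_mul _ _ p).differentiableAt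

theorem differentiableAt_blockInner : DifferentiableAt ℝ (blockInner part σ) p := by
  rw [blockInner_eq_sum_mul]
  exact (hasFDerivAt_sum_mul _ _ p).differentiableAt

theorem fderiv_blockNormSq_apply (v : (Fin (n + 1) → ℝ) × (Fin (n + 1) → ℝ)) :
    fderiv ℝ (blockNormSq part σ) p v
      = 2 * ∑ i, Pproj part σ v.1 i * Pproj part σ p.1 i := by
  rw [blockNormSq_eq_sum_mul, fderiv_sum_mul_apply, mul_sum]
  simp only [ContinuousLinearMap.coe_comp, Function.comp_apply, ContinuousLinearMap.coe_fst',
    blockProj_apply]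
  exact sum_congr rfl fun i _ => by ring

theorem fderiv_blockInner_apply (v : (Fin (n + 1) → ℝ) × (Fin (n + 1) → ℝ)) :
    fderiv ℝ (blockInner part σ) p v
      = ∑ i, (Pproj part σ v.1 i * Pproj part σ p.2 i
          + Pproj part σ p.1 i * Pproj part σ v.2 i) := by
  rw [blockInner_eq_sum_mul, fderiv_sum_mul_apply]
  simp only [ContinuousLinearMap.coe_comp, Function.comp_apply, ContinuousLinearMap.coe_fst',
    ContinuousLinearMap.coe_snd', blockProj_apply]
  exact sum_congr rfl fun i _ => by ring

theorem fderiv_blockNormSq_single_fst (j : Fin (n + 1)) :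
    fderiv ℝ (blockNormSq part σ) p (Pi.single j 1, 0) = 2 * Pproj part σ p.1 j := by
  rw [fderiv_blockNormSq_apply, sum_Pproj_single_mul]

theorem fderiv_blockNormSq_single_snd (j : Fin (n + 1)) :
    fderiv ℝ (blockNormSq part σ) p (0, Pi.single j 1) = 0 := by
  simp only [fderiv_blockNormSq_apply, Pproj_zero, Pi.zero_apply, zero_mul, sum_const_zero,
    mul_zero]

theorem fderiv_blockInner_single_fst (j : Fin (n + 1)) :
    fderiv ℝ (blockInner part σ) p (Pi.single j 1, 0) = Pproj part σ p.2 j := by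
  simp only [fderiv_blockInner_apply, Pproj_zero, Pi.zero_apply, mul_zero, add_zero,
    sum_Pproj_single_mul]

theorem fderiv_blockInner_single_snd (j : Fin (n + 1)) :
    fderiv ℝ (blockInner part σ) p (0, Pi.single j 1) = Pproj part σ p.1 j := by
  simp only [fderiv_blockInner_apply, Pproj_zero, Pi.zero_apply, zero_mul, zero_add,
    mul_comm (Pproj part σ p.1 _), sum_Pproj_single_mul]

theorem canPB_blockNormSq_blockNormSq (τ : Fin (ℓ + 1)) :
    canPB (blockNormSq part σ) (blockNormSq part τ) p = 0 := by
  simp [canPB, fderiv_blockNormSq_single_fst, fderiv_blockNormSq_single_snd]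

theorem canPB_blockNormSq_blockInner (τ : Fin (ℓ + 1)) :
    canPB (blockNormSq part σ) (blockInner part τ) p
      = if σ = τ then 2 * blockNormSq part σ p else 0 := by
  simp only [canPB, fderiv_blockNormSq_single_fst, fderiv_blockNormSq_single_snd,
    fderiv_blockInner_single_snd, zero_mul, sub_zero, mul_assoc, ← mul_sum]
  rw [sum_Pproj_mul_Pproj, mul_ite, mul_zero]
  rfl

theorem canPB_blockInner_blockNormSq (τ : Fin (ℓ + 1)) :
    canPB (blockInner part σ) (blockNormSq part τ) p
      = if σ = τ then -(2 * blockNormSq part σ p) else 0 := by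
  rw [canPB_swap, canPB_blockNormSq_blockInner]
  by_cases h : σ = τ
  · subst h; simp
  · simp [h, Ne.symm h]

theorem canPB_blockInner_blockInner (τ : Fin (ℓ + 1)) :
    canPB (blockInner part σ) (blockInner part τ) p = 0 := by
  simp only [canPB, fderiv_blockInner_single_fst, fderiv_blockInner_single_snd]
  by_cases h : σ = τ
  · subst h
    simp [mul_comm]
  · simp only [sum_sub_distrib, sum_Pproj_mul_Pproj part σ τ, if_neg h, sub_zero]

theorem xiFun_sq : xiFun part σ p ^ 2 = blockNormSq part σ p :=
  Real.sq_sqrt (sum_nonneg fun _ _ => mul_self_nonneg _)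

theorem xiFun_pos (hσ : Pproj part σ p.1 ≠ 0) : 0 < xiFun part σ p := by
  obtain ⟨i, hi⟩ := Function.ne_iff.mp hσ
  exact Real.sqrt_pos.mpr
    (sum_pos' (fun j _ => mul_self_nonneg _) ⟨i, mem_univ i, mul_self_pos.mpr hi⟩)

theorem hasFDerivAt_xiFun (hσ : Pproj part σ p.1 ≠ 0) :
    HasFDerivAt (xiFun part σ)
      ((2 * xiFun part σ p)⁻¹ • fderiv ℝ (blockNormSq part σ) p) p := by
  have hQ : blockNormSq part σ p ≠ 0 := by
    rw [← xiFun_sq]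
    exact pow_ne_zero 2 (xiFun_pos part σ p hσ).ne'
  have h := (differentiableAt_blockNormSq part σ p).hasFDerivAt.sqrt hQ
  rw [one_div] at h
  exact h

theorem fderiv_etaFun (hσ : Pproj part σ p.1 ≠ 0) :
    fderiv ℝ (etaFun part σ) p = (xiFun part σ p)⁻¹ • fderiv ℝ (blockInner part σ) p
      - (etaFun part σ p / xiFun part σ p) • fderiv ℝ (xiFun part σ) p := by
  have hξ := (xiFun_pos part σ p hσ).ne'
  have hinv := (hasDerivAt_inv hξ).comp_hasFDerivAt p (hasFDerivAt_xiFun part σ p hσ)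
  have h := (differentiableAt_blockInner part σ p).hasFDerivAt.mul hinv
  rw [(hasFDerivAt_xiFun part σ p hσ).fderiv]
  change fderiv ℝ (blockInner part σ * (fun y => y⁻¹) ∘ xiFun part σ) p = _
  rw [h.fderiv]
  simp only [etaFun, blockInner, Function.comp_apply]
  module

theorem fderiv_C1fun : fderiv ℝ C1fun p = ∑ τ, fderiv ℝ (blockNormSq part τ) p := by
  rw [← sum_blockNormSq part, fderiv_sum fun τ _ => differentiableAt_blockNormSq part τ p]

theorem fderiv_C2fun : fderiv ℝ C2fun p = ∑ τ, fderiv ℝ (blockInner part τ) p := by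
  rw [← sum_blockInner part, fderiv_sum fun τ _ => differentiableAt_blockInner part τ p]

variable {part σ p}

theorem canPB_xiFun_xiFun (hσ : Pproj part σ p.1 ≠ 0) {τ : Fin (ℓ + 1)}
    (hτ : Pproj part τ p.1 ≠ 0) : canPB (xiFun part σ) (xiFun part τ) p = 0 := by
  rw [canPB_eq_poissonTensor, (hasFDerivAt_xiFun part σ p hσ).fderiv,
    (hasFDerivAt_xiFun part τ p hτ).fderiv]
  simp only [map_smul, LinearMap.smul_apply, smul_eq_mul, ← canPB_eq_poissonTensor,
    canPB_blockNormSq_blockNormSq, mul_zero]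

theorem canPB_xiFun_etaFun (hσ : Pproj part σ p.1 ≠ 0) {τ : Fin (ℓ + 1)}
    (hτ : Pproj part τ p.1 ≠ 0) :
    canPB (xiFun part σ) (etaFun part τ) p = if σ = τ then 1 else 0 := by
  rw [canPB_eq_poissonTensor, (hasFDerivAt_xiFun part σ p hσ).fderiv, fderiv_etaFun part τ p hτ,
    (hasFDerivAt_xiFun part τ p hτ).fderiv]
  simp only [map_smul, map_sub, LinearMap.smul_apply, smul_eq_mul, ← canPB_eq_poissonTensor,
    canPB_blockNormSq_blockNormSq, canPB_blockNormSq_blockInner, mul_zero, sub_zero]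
  split_ifs with h
  · subst h
    have := (xiFun_pos part σ p hσ).ne'
    rw [← xiFun_sq]
    field_simp
  · simp

theorem canPB_etaFun_etaFun (hσ : Pproj part σ p.1 ≠ 0) {τ : Fin (ℓ + 1)}
    (hτ : Pproj part τ p.1 ≠ 0) : canPB (etaFun part σ) (etaFun part τ) p = 0 := by
  rw [canPB_eq_poissonTensor, fderiv_etaFun part σ p hσ, fderiv_etaFun part τ p hτ,
    (hasFDerivAt_xiFun part σ p hσ).fderiv, (hasFDerivAt_xiFun part τ p hτ).fderiv]
  simp only [map_smul, map_sub, LinearMap.smul_apply, LinearMap.sub_apply, smul_eq_mul,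
    ← canPB_eq_poissonTensor, canPB_blockNormSq_blockNormSq, canPB_blockNormSq_blockInner,
    canPB_blockInner_blockNormSq, canPB_blockInner_blockInner]
  split_ifs with h
  · subst h
    ring
  · simp

theorem canPB_xiFun_C1fun (hσ : Pproj part σ p.1 ≠ 0) : canPB (xiFun part σ) C1fun p = 0 := by
  rw [canPB_eq_poissonTensor, (hasFDerivAt_xiFun part σ p hσ).fderiv, fderiv_C1fun part]
  simp only [map_sum, map_smul, LinearMap.smul_apply, smul_eq_mul, ← canPB_eq_poissonTensor,
    canPB_blockNormSq_blockNormSq, mul_zero, sum_const_zero]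

theorem canPB_xiFun_C2fun (hσ : Pproj part σ p.1 ≠ 0) :
    canPB (xiFun part σ) C2fun p = xiFun part σ p := by
  rw [canPB_eq_poissonTensor, (hasFDerivAt_xiFun part σ p hσ).fderiv, fderiv_C2fun part]
  simp only [map_sum, map_smul, LinearMap.smul_apply, smul_eq_mul, ← canPB_eq_poissonTensor,
    canPB_blockNormSq_blockInner, mul_ite, mul_zero, sum_ite_eq, mem_univ, if_true]
  have := (xiFun_pos part σ p hσ).ne'
  rw [← xiFun_sq]
  field_simp

theorem canPB_etaFun_C1fun (hσ : Pproj part σ p.1 ≠ 0) :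
    canPB (etaFun part σ) C1fun p = -(2 * xiFun part σ p) := by
  rw [canPB_eq_poissonTensor, fderiv_etaFun part σ p hσ, (hasFDerivAt_xiFun part σ p hσ).fderiv,
    fderiv_C1fun part]
  simp only [map_sum, map_smul, map_sub, LinearMap.smul_apply, LinearMap.sub_apply, smul_eq_mul,
    ← canPB_eq_poissonTensor, canPB_blockNormSq_blockNormSq, canPB_blockInner_blockNormSq,
    mul_ite, mul_zero, sub_zero, sum_ite_eq, mem_univ, if_true]
  have := (xiFun_pos part σ p hσ).ne'
  rw [← xiFun_sq]
  field_simp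

theorem canPB_etaFun_C2fun (hσ : Pproj part σ p.1 ≠ 0) :
    canPB (etaFun part σ) C2fun p = -etaFun part σ p := by
  rw [canPB_eq_poissonTensor, fderiv_etaFun part σ p hσ, (hasFDerivAt_xiFun part σ p hσ).fderiv,
    fderiv_C2fun part]
  simp only [map_sum, map_smul, map_sub, LinearMap.smul_apply, LinearMap.sub_apply, smul_eq_mul,
    ← canPB_eq_poissonTensor, canPB_blockNormSq_blockInner, canPB_blockInner_blockInner,
    mul_ite, mul_zero, zero_sub, sum_neg_distrib, sum_ite_eq, mem_univ, if_true]
  have := (xiFun_pos part σ p hσ).ne'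
  rw [← xiFun_sq]
  field_simp

end Blocks

theorem stmt12_general (n ℓ : ℕ) (part : Fin (n + 1) → Fin (ℓ + 1))
    (p : (Fin (n + 1) → ℝ) × (Fin (n + 1) → ℝ))
    (hp : ∀ σ, Pproj part σ p.1 ≠ 0) (σ τ : Fin (ℓ + 1)) :
    diracPB (xiFun part σ) (xiFun part τ) p = 0 ∧
    diracPB (xiFun part σ) (etaFun part τ) p
      = (if σ = τ then 1 else 0) - xiFun part σ p * xiFun part τ p / C1fun p ∧
    diracPB (etaFun part σ) (etaFun part τ) p
      = (xiFun part τ p * etaFun part σ p - xiFun part σ p * etaFun part τ p) / C1fun p := by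
  have hσ := hp σ
  have hτ := hp τ
  refine ⟨?_, ?_, ?_⟩
  · rw [diracPB, canPB_xiFun_xiFun hσ hτ, canPB_xiFun_C1fun hσ, canPB_swap _ C1fun,
      canPB_xiFun_C1fun hτ]
    ring
  · rw [diracPB, canPB_xiFun_etaFun hσ hτ, canPB_xiFun_C1fun hσ, canPB_xiFun_C2fun hσ,
      canPB_swap _ C1fun, canPB_etaFun_C1fun hτ]
    ring
  · rw [diracPB, canPB_etaFun_etaFun hσ hτ, canPB_etaFun_C1fun hσ, canPB_etaFun_C2fun hσ,
      canPB_swap _ C1fun, canPB_etaFun_C1fun hτ, canPB_swap _ C2fun, canPB_etaFun_C2fun hτ]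
    ring

/-- **The regular reduction map is a Poisson map.**
For a partition of `{0,…,n}` into blocks `I_0,…,I_ℓ` (encoded by the surjective block map
`part`), at every point with `P_σ x ≠ 0` for all `σ`, the functions `ξ_σ = ‖P_σ x‖` and
`η_σ = ⟨P_σ x, P_σ y⟩/‖P_σ x‖` satisfy the Dirac bracket relations
`{ξ_σ, ξ_τ} = 0`, `{ξ_σ, η_τ} = δ_{στ} − ξ_σ ξ_τ / C1`,
`{η_σ, η_τ} = (ξ_τ η_σ − ξ_σ η_τ)/C1`. -/
theorem stmt12 (n ℓ : ℕ) (part : Fin (n + 1) → Fin (ℓ + 1))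
    (hpart : Function.Surjective part)
    (p : (Fin (n + 1) → ℝ) × (Fin (n + 1) → ℝ))
    (hp : ∀ σ, Pproj part σ p.1 ≠ 0) (σ τ : Fin (ℓ + 1)) :
    diracPB (xiFun part σ) (xiFun part τ) p = 0 ∧
    diracPB (xiFun part σ) (etaFun part τ) p
      = (if σ = τ then 1 else 0) - xiFun part σ p * xiFun part τ p / C1fun p ∧
    diracPB (etaFun part σ) (etaFun part τ) p
      = (xiFun part τ p * etaFun part σ p - xiFun part σ p * etaFun part τ p) / C1fun p :=
  stmt12_general n ℓ part p hp σ τ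
end
end

section
/- Singular reduction bracket relations: let I_0,…,I_ℓ be a partition of {0,…,n}, let P_σ denote the orthogonal projection of ℝ^{n+1} onto the coordinates with indices in I_σ, and define the invariants V_σ = ½‖P_σ x‖², T_σ = ½‖P_σ y‖², S_σ = ⟨P_σ x, P_σ y⟩. Then at every point (x,y) with C1 = ⟨x,x⟩ ≠ 0 (note C1 = 2∑_σ V_σ), the Dirac brackets satisfy, for all σ, τ: {V_σ, T_τ} = S_τ·(δ_{στ} − 2V_σ/C1), {V_σ, S_τ} = 2V_σ·(δ_{στ} − 2V_τ/C1), {T_σ, S_τ} = −2T_σ·(δ_{στ} − 2V_τ/C1), {T_σ, T_τ} = (2T_σ·S_τ − 2T_τ·S_σ)/C1, {S_σ, S_τ} = 0, and {V_σ, V_τ} = 0. -/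
noncomputable section

open scoped Classical

/-- The invariant `V_σ = ½‖P_σ x‖²` of the block `I_σ = part⁻¹(σ)`. -/
def Vinv {n ℓ : ℕ} (part : Fin (n + 1) → Fin (ℓ + 1)) (σ : Fin (ℓ + 1))
    (p : (Fin (n + 1) → ℝ) × (Fin (n + 1) → ℝ)) : ℝ :=
  (1 / 2) * ∑ i, if part i = σ then p.1 i * p.1 i else 0

/-- The invariant `T_σ = ½‖P_σ y‖²`. -/
def Tinv {n ℓ : ℕ} (part : Fin (n + 1) → Fin (ℓ + 1)) (σ : Fin (ℓ + 1))
    (p : (Fin (n + 1) → ℝ) × (Fin (n + 1) → ℝ)) : ℝ :=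
  (1 / 2) * ∑ i, if part i = σ then p.2 i * p.2 i else 0

/-- The invariant `S_σ = ⟨P_σ x, P_σ y⟩`. -/
def Sinv {n ℓ : ℕ} (part : Fin (n + 1) → Fin (ℓ + 1)) (σ : Fin (ℓ + 1))
    (p : (Fin (n + 1) → ℝ) × (Fin (n + 1) → ℝ)) : ℝ :=
  ∑ i, if part i = σ then p.1 i * p.2 i else 0

/-!
Every function involved is a diagonal quadratic form `∑ᵢ (aᵢ xᵢ² + bᵢ xᵢ yᵢ + dᵢ yᵢ²)`, and the
canonical bracket of two such forms is again one, with coefficients `2(ab' − a'b)`, `4(ad' − a'd)`,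
`2(bd' − b'd)` computed coordinatewise: in each coordinate this is the bracket of `𝔰𝔭(2, ℝ)`.
The invariants of a block `I_σ` are the forms whose coefficients are constant on `I_σ` and vanish
off it, so invariants of different blocks commute and every canonical bracket among `V`, `S`, `T`,
`C1`, `C2` is a linear combination of `V_σ`, `S_σ`, `T_σ`. The Dirac relations are then rational
identities in these values.
-/

section DiagonalQuadratic

variable {N : ℕ}

theorem canPB_comm (f g : (Fin N → ℝ) × (Fin N → ℝ) → ℝ) (p : (Fin N → ℝ) × (Fin N → ℝ)) :
    canPB f g p = -canPB g f p := by
  rw [canPB, canPB, ← Finset.sum_neg_distrib]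
  exact Finset.sum_congr rfl fun i _ => by ring

def diagQuad (a b d : Fin N → ℝ) (q : (Fin N → ℝ) × (Fin N → ℝ)) : ℝ :=
  ∑ i, (a i * (q.1 i * q.1 i) + b i * (q.1 i * q.2 i) + d i * (q.2 i * q.2 i))

theorem fderiv_diagQuad_apply (a b d : Fin N → ℝ) (p v : (Fin N → ℝ) × (Fin N → ℝ)) :
    fderiv ℝ (diagQuad a b d) p v
      = ∑ i, ((2 * a i * p.1 i + b i * p.2 i) * v.1 i
          + (b i * p.1 i + 2 * d i * p.2 i) * v.2 i) := by
  have hx (i : Fin N) := (hasFDerivAt_apply i p.1).comp p (hasFDerivAt_fst (𝕜 := ℝ))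
  have hy (i : Fin N) := (hasFDerivAt_apply i p.2).comp p (hasFDerivAt_snd (𝕜 := ℝ))
  have hQ := HasFDerivAt.fun_sum (u := Finset.univ) fun i _ =>
    (((hx i).mul (hx i)).const_mul (a i)).add (((hx i).mul (hy i)).const_mul (b i)) |>.add
      (((hy i).mul (hy i)).const_mul (d i))
  rw [HasFDerivAt.fderiv (f := diagQuad a b d) hQ, FunLike.coe_sum, Finset.sum_apply]
  refine Finset.sum_congr rfl fun i _ => ?_
  simp only [Function.comp_apply, smul_add, add_apply, smul_apply, ContinuousLinearMap.comp_apply,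
    ContinuousLinearMap.coe_fst', ContinuousLinearMap.coe_snd', ContinuousLinearMap.proj_apply,
    smul_eq_mul]
  ring

theorem fderiv_diagQuad_single_fst (a b d : Fin N → ℝ) (p : (Fin N → ℝ) × (Fin N → ℝ))
    (j : Fin N) :
    fderiv ℝ (diagQuad a b d) p (Pi.single j 1, 0) = 2 * a j * p.1 j + b j * p.2 j := by
  simp [fderiv_diagQuad_apply, Pi.single_apply]

theorem fderiv_diagQuad_single_snd (a b d : Fin N → ℝ) (p : (Fin N → ℝ) × (Fin N → ℝ))
    (j : Fin N) :
    fderiv ℝ (diagQuad a b d) p (0, Pi.single j 1) = b j * p.1 j + 2 * d j * p.2 j := by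
  simp [fderiv_diagQuad_apply, Pi.single_apply]

theorem canPB_diagQuad (a b d a' b' d' : Fin N → ℝ) (p : (Fin N → ℝ) × (Fin N → ℝ)) :
    canPB (diagQuad a b d) (diagQuad a' b' d') p
      = diagQuad (fun i => 2 * (a i * b' i - a' i * b i)) (fun i => 4 * (a i * d' i - a' i * d i))
          (fun i => 2 * (b i * d' i - b' i * d i)) p := by
  simp only [canPB, diagQuad, fderiv_diagQuad_single_fst, fderiv_diagQuad_single_snd]
  refine Finset.sum_congr rfl fun i _ => ?_
  ring

theorem C1fun_eq_diagQuad : (C1fun : (Fin N → ℝ) × (Fin N → ℝ) → ℝ) = diagQuad 1 0 0 := by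
  ext q
  simp [C1fun, diagQuad]

theorem C2fun_eq_diagQuad : (C2fun : (Fin N → ℝ) × (Fin N → ℝ) → ℝ) = diagQuad 0 1 0 := by
  ext q
  simp [C2fun, diagQuad]

end DiagonalQuadratic

section BlockQuadratic

variable {N : ℕ} {ι : Type*} [DecidableEq ι] (part : Fin N → ι)

def blockQuad (σ : ι) (a b d : ℝ) : (Fin N → ℝ) × (Fin N → ℝ) → ℝ :=
  diagQuad (fun i => if part i = σ then a else 0) (fun i => if part i = σ then b else 0)
    (fun i => if part i = σ then d else 0)

theorem canPB_blockQuad (σ τ : ι) (a b d a' b' d' : ℝ) (p : (Fin N → ℝ) × (Fin N → ℝ)) :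
    canPB (blockQuad part σ a b d) (blockQuad part τ a' b' d') p
      = (if σ = τ then 1 else 0) * blockQuad part τ
          (2 * (a * b' - a' * b)) (4 * (a * d' - a' * d)) (2 * (b * d' - b' * d)) p := by
  rw [blockQuad, blockQuad, canPB_diagQuad, blockQuad, diagQuad, diagQuad, Finset.mul_sum]
  refine Finset.sum_congr rfl fun i _ => ?_
  split_ifs <;> simp_all

theorem canPB_blockQuad_C1fun (σ : ι) (a b d : ℝ) (p : (Fin N → ℝ) × (Fin N → ℝ)) :
    canPB (blockQuad part σ a b d) C1fun p = blockQuad part σ (-2 * b) (-4 * d) 0 p := by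
  rw [blockQuad, C1fun_eq_diagQuad, canPB_diagQuad, blockQuad, diagQuad, diagQuad]
  refine Finset.sum_congr rfl fun i _ => ?_
  split_ifs <;> simp

theorem canPB_blockQuad_C2fun (σ : ι) (a b d : ℝ) (p : (Fin N → ℝ) × (Fin N → ℝ)) :
    canPB (blockQuad part σ a b d) C2fun p = blockQuad part σ (2 * a) 0 (-2 * d) p := by
  rw [blockQuad, C2fun_eq_diagQuad, canPB_diagQuad, blockQuad, diagQuad, diagQuad]
  refine Finset.sum_congr rfl fun i _ => ?_
  split_ifs <;> simp

end BlockQuadratic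

section Invariants

variable {n ℓ : ℕ} (part : Fin (n + 1) → Fin (ℓ + 1)) (σ : Fin (ℓ + 1))

theorem blockQuad_apply (a b d : ℝ) (p : (Fin (n + 1) → ℝ) × (Fin (n + 1) → ℝ)) :
    blockQuad part σ a b d p
      = 2 * a * Vinv part σ p + b * Sinv part σ p + 2 * d * Tinv part σ p := by
  simp only [blockQuad, diagQuad, Vinv, Sinv, Tinv, Finset.mul_sum, ← Finset.sum_add_distrib]
  refine Finset.sum_congr rfl fun i _ => ?_
  split_ifs <;> ring

theorem Vinv_eq_blockQuad : Vinv part σ = blockQuad part σ (1 / 2) 0 0 := by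
  ext p
  rw [blockQuad_apply]
  ring

theorem Tinv_eq_blockQuad : Tinv part σ = blockQuad part σ 0 0 (1 / 2) := by
  ext p
  rw [blockQuad_apply]
  ring

theorem Sinv_eq_blockQuad : Sinv part σ = blockQuad part σ 0 1 0 := by
  ext p
  rw [blockQuad_apply]
  ring

end Invariants

theorem stmt13_general (n ℓ : ℕ) (part : Fin (n + 1) → Fin (ℓ + 1))
    (p : (Fin (n + 1) → ℝ) × (Fin (n + 1) → ℝ))
    (hp : C1fun p ≠ 0) (σ τ : Fin (ℓ + 1)) :
    diracPB (Vinv part σ) (Tinv part τ) p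
      = Sinv part τ p * ((if σ = τ then 1 else 0) - 2 * Vinv part σ p / C1fun p) ∧
    diracPB (Vinv part σ) (Sinv part τ) p
      = 2 * Vinv part σ p * ((if σ = τ then 1 else 0) - 2 * Vinv part τ p / C1fun p) ∧
    diracPB (Tinv part σ) (Sinv part τ) p
      = -(2 * Tinv part σ p) * ((if σ = τ then 1 else 0) - 2 * Vinv part τ p / C1fun p) ∧
    diracPB (Tinv part σ) (Tinv part τ) p
      = (2 * Tinv part σ p * Sinv part τ p - 2 * Tinv part τ p * Sinv part σ p) / C1fun p ∧
    diracPB (Sinv part σ) (Sinv part τ) p = 0 ∧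
    diracPB (Vinv part σ) (Vinv part τ) p = 0 := by
  simp only [diracPB, canPB_comm C1fun, canPB_comm C2fun, Vinv_eq_blockQuad, Tinv_eq_blockQuad,
    Sinv_eq_blockQuad, canPB_blockQuad, canPB_blockQuad_C1fun, canPB_blockQuad_C2fun]
  simp only [blockQuad_apply]
  split_ifs with hστ
  · subst hστ
    refine ⟨?_, ?_, ?_, ?_, ?_, ?_⟩ <;> field_simp <;> ring
  · refine ⟨?_, ?_, ?_, ?_, ?_, ?_⟩ <;> field_simp <;> ring

/-- **Singular reduction bracket relations.**
For a partition of `{0,…,n}` into blocks `I_0,…,I_ℓ` (encoded by the surjective block map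
`part`) and the invariants `V_σ = ½‖P_σ x‖²`, `T_σ = ½‖P_σ y‖²`, `S_σ = ⟨P_σ x, P_σ y⟩`,
at every point with `C1 = ⟨x,x⟩ ≠ 0` the Dirac brackets satisfy the stated relations. -/
theorem stmt13 (n ℓ : ℕ) (part : Fin (n + 1) → Fin (ℓ + 1))
    (hpart : Function.Surjective part)
    (p : (Fin (n + 1) → ℝ) × (Fin (n + 1) → ℝ))
    (hp : C1fun p ≠ 0) (σ τ : Fin (ℓ + 1)) :
    diracPB (Vinv part σ) (Tinv part τ) p
      = Sinv part τ p * ((if σ = τ then 1 else 0) - 2 * Vinv part σ p / C1fun p) ∧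
    diracPB (Vinv part σ) (Sinv part τ) p
      = 2 * Vinv part σ p * ((if σ = τ then 1 else 0) - 2 * Vinv part τ p / C1fun p) ∧
    diracPB (Tinv part σ) (Sinv part τ) p
      = -(2 * Tinv part σ p) * ((if σ = τ then 1 else 0) - 2 * Vinv part τ p / C1fun p) ∧
    diracPB (Tinv part σ) (Tinv part τ) p
      = (2 * Tinv part σ p * Sinv part τ p - 2 * Tinv part τ p * Sinv part σ p) / C1fun p ∧
    diracPB (Sinv part σ) (Sinv part τ) p = 0 ∧
    diracPB (Vinv part σ) (Vinv part τ) p = 0 :=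
  stmt13_general n ℓ part p hp σ τ
end
end

section
/- Casimirs of the singularly reduced degenerate Neumann system: with I_0,…,I_ℓ a partition of {0,…,n}, P_σ the orthogonal projection of ℝ^{n+1} onto the coordinates with indices in I_σ, and the invariants V_σ = ½‖P_σ x‖², T_σ = ½‖P_σ y‖², S_σ = ⟨P_σ x, P_σ y⟩, define W_σ = 4·V_σ·T_σ − S_σ², C1 = 2∑_σ V_σ and C2 = ∑_σ S_σ. Then at every point (x,y) with ⟨x,x⟩ ≠ 0, the Dirac brackets of each of the functions W_σ (for every σ), C1 and C2 with each of the functions V_τ, T_τ, S_τ (for every τ) all vanish. -/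
/-!
For a weight vector `w` put `V_w = ½ ∑ wᵢ xᵢ²`, `T_w = ½ ∑ wᵢ yᵢ²`, `S_w = ∑ wᵢ xᵢ yᵢ`. These satisfy
the `sp(2)` relations `[V_a, T_b] = S_{ab}`, `[V_a, S_b] = 2 V_{ab}`, `[T_a, S_b] = -2 T_{ab}`, the
other brackets vanishing. The block invariants are those with `w` the indicator of `I_σ`, and
`C1 = V_2`, `C2 = S_1`. Whenever `a b = k a`, which covers both the products of block indicators and
the constant weights, these relations make the Casimir `W_a = 4 V_a T_a - S_a²` of `sp(2)` commute with
`V_b`, `T_b`, `S_b`. In particular `W_σ` commutes with `C1` and `C2`, so its Dirac bracket is its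
canonical bracket, which vanishes. The constraints are Casimirs of the Dirac bracket outright:
`[C1, C1] = 0` and `[C1, C2] = 2 C1` make the correction terms cancel `[C1, g]` and `[C2, g]`.
-/

noncomputable section

open scoped Classical

/-- `W_σ = 4 V_σ T_σ − S_σ²`. -/
def Winv {n ℓ : ℕ} (part : Fin (n + 1) → Fin (ℓ + 1)) (σ : Fin (ℓ + 1))
    (p : (Fin (n + 1) → ℝ) × (Fin (n + 1) → ℝ)) : ℝ :=
  4 * Vinv part σ p * Tinv part σ p - (Sinv part σ p) ^ 2

open ContinuousLinearMap

abbrev PhaseSpace (N : ℕ) := (Fin N → ℝ) × (Fin N → ℝ)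

section CanonicalBracket

variable {N : ℕ} (f g h : PhaseSpace N → ℝ) (p : PhaseSpace N)

theorem canPB_antisymm : canPB g f p = -canPB f g p := by
  simp only [canPB, ← Finset.sum_neg_distrib]
  exact Finset.sum_congr rfl fun i _ => by ring

theorem canPB_self : canPB f f p = 0 := by
  linarith [canPB_antisymm f f p]

variable {f g p}

theorem canPB_sub_left (hf : DifferentiableAt ℝ f p) (hg : DifferentiableAt ℝ g p) :
    canPB (fun q => f q - g q) h p = canPB f h p - canPB g h p := by
  simp only [canPB, fderiv_fun_sub hf hg, ← Finset.sum_sub_distrib]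
  exact Finset.sum_congr rfl fun i _ => by simp only [sub_apply]; ring

theorem canPB_mul_left (hf : DifferentiableAt ℝ f p) (hg : DifferentiableAt ℝ g p) :
    canPB (fun q => f q * g q) h p = f p * canPB g h p + g p * canPB f h p := by
  simp only [canPB, fderiv_fun_mul hf hg, Finset.mul_sum, ← Finset.sum_add_distrib]
  exact Finset.sum_congr rfl fun i _ => by
    simp only [add_apply, smul_apply, smul_eq_mul]; ring

theorem canPB_const_mul_left (c : ℝ) (hf : DifferentiableAt ℝ f p) :
    canPB (fun q => c * f q) h p = c * canPB f h p := by
  simp only [canPB, fderiv_const_mul hf, Finset.mul_sum]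
  exact Finset.sum_congr rfl fun i _ => by simp only [smul_apply, smul_eq_mul]; ring

end CanonicalBracket

section WeightedForms

variable {N : ℕ}

def weightedV (w : Fin N → ℝ) (p : PhaseSpace N) : ℝ := (1 / 2) * ∑ i, w i * (p.1 i * p.1 i)

def weightedT (w : Fin N → ℝ) (p : PhaseSpace N) : ℝ := (1 / 2) * ∑ i, w i * (p.2 i * p.2 i)

def weightedS (w : Fin N → ℝ) (p : PhaseSpace N) : ℝ := ∑ i, w i * (p.1 i * p.2 i)

def weightedW (w : Fin N → ℝ) (p : PhaseSpace N) : ℝ :=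
  4 * weightedV w p * weightedT w p - weightedS w p ^ 2

theorem hasFDerivAt_weighted_sum_mul (w : Fin N → ℝ) (A B : PhaseSpace N →L[ℝ] (Fin N → ℝ))
    (p : PhaseSpace N) :
    HasFDerivAt (fun q => ∑ i, w i * (A q i * B q i))
      (∑ i, w i • (A p i • (proj i ∘L B) + B p i • (proj i ∘L A))) p :=
  HasFDerivAt.fun_sum fun i _ =>
    ((proj i ∘L A).hasFDerivAt.mul (proj i ∘L B).hasFDerivAt).const_mul (w i)

variable (w : Fin N → ℝ) (p : PhaseSpace N)

theorem differentiableAt_weightedV : DifferentiableAt ℝ (weightedV w) p := by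
  unfold weightedV; fun_prop

theorem differentiableAt_weightedT : DifferentiableAt ℝ (weightedT w) p := by
  unfold weightedT; fun_prop

theorem differentiableAt_weightedS : DifferentiableAt ℝ (weightedS w) p := by
  unfold weightedS; fun_prop

theorem fderiv_weightedV_apply (v : PhaseSpace N) :
    fderiv ℝ (weightedV w) p v = ∑ i, w i * (p.1 i * v.1 i) := by
  have h : HasFDerivAt (weightedV w) _ p :=
    (hasFDerivAt_weighted_sum_mul w (fst ℝ _ _) (fst ℝ _ _) p).const_mul (1 / 2 : ℝ)
  simp only [h.fderiv, smul_apply, sum_apply, add_apply, comp_apply, proj_apply, coe_fst',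
    smul_eq_mul, Finset.mul_sum]
  exact Finset.sum_congr rfl fun i _ => by ring

theorem fderiv_weightedT_apply (v : PhaseSpace N) :
    fderiv ℝ (weightedT w) p v = ∑ i, w i * (p.2 i * v.2 i) := by
  have h : HasFDerivAt (weightedT w) _ p :=
    (hasFDerivAt_weighted_sum_mul w (snd ℝ _ _) (snd ℝ _ _) p).const_mul (1 / 2 : ℝ)
  simp only [h.fderiv, smul_apply, sum_apply, add_apply, comp_apply, proj_apply, coe_snd',
    smul_eq_mul, Finset.mul_sum]
  exact Finset.sum_congr rfl fun i _ => by ring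

theorem fderiv_weightedS_apply (v : PhaseSpace N) :
    fderiv ℝ (weightedS w) p v = ∑ i, w i * (p.1 i * v.2 i + p.2 i * v.1 i) := by
  have h : HasFDerivAt (weightedS w) _ p :=
    hasFDerivAt_weighted_sum_mul w (fst ℝ _ _) (snd ℝ _ _) p
  simp [h.fderiv, mul_add]

end WeightedForms

section CoordinatePartials

variable {N : ℕ} (w : Fin N → ℝ) (p : PhaseSpace N) (j : Fin N)

theorem fderiv_weightedV_single_zero :
    fderiv ℝ (weightedV w) p (Pi.single j 1, 0) = w j * p.1 j := by
  simp [fderiv_weightedV_apply, Pi.single_apply]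

theorem fderiv_weightedV_zero_single : fderiv ℝ (weightedV w) p (0, Pi.single j 1) = 0 := by
  simp [fderiv_weightedV_apply]

theorem fderiv_weightedT_single_zero : fderiv ℝ (weightedT w) p (Pi.single j 1, 0) = 0 := by
  simp [fderiv_weightedT_apply]

theorem fderiv_weightedT_zero_single :
    fderiv ℝ (weightedT w) p (0, Pi.single j 1) = w j * p.2 j := by
  simp [fderiv_weightedT_apply, Pi.single_apply]

theorem fderiv_weightedS_single_zero :
    fderiv ℝ (weightedS w) p (Pi.single j 1, 0) = w j * p.2 j := by
  simp [fderiv_weightedS_apply, Pi.single_apply]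

theorem fderiv_weightedS_zero_single :
    fderiv ℝ (weightedS w) p (0, Pi.single j 1) = w j * p.1 j := by
  simp [fderiv_weightedS_apply, Pi.single_apply]

end CoordinatePartials

section Brackets

variable {N : ℕ} (a b : Fin N → ℝ) (p : PhaseSpace N)

theorem canPB_weightedV_weightedV : canPB (weightedV a) (weightedV b) p = 0 :=
  Finset.sum_eq_zero fun j _ => by
    rw [fderiv_weightedV_zero_single, fderiv_weightedV_zero_single]; ring

theorem canPB_weightedT_weightedT : canPB (weightedT a) (weightedT b) p = 0 :=
  Finset.sum_eq_zero fun j _ => by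
    rw [fderiv_weightedT_single_zero, fderiv_weightedT_single_zero]; ring

theorem canPB_weightedS_weightedS : canPB (weightedS a) (weightedS b) p = 0 :=
  Finset.sum_eq_zero fun j _ => by
    rw [fderiv_weightedS_single_zero, fderiv_weightedS_zero_single, fderiv_weightedS_single_zero,
      fderiv_weightedS_zero_single]
    ring

theorem canPB_weightedV_weightedT :
    canPB (weightedV a) (weightedT b) p = weightedS (a * b) p :=
  Finset.sum_congr rfl fun j _ => by
    rw [fderiv_weightedV_single_zero, fderiv_weightedV_zero_single, fderiv_weightedT_single_zero,
      fderiv_weightedT_zero_single, Pi.mul_apply]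
    ring

theorem canPB_weightedV_weightedS :
    canPB (weightedV a) (weightedS b) p = 2 * weightedV (a * b) p := by
  rw [weightedV, ← mul_assoc, mul_one_div_cancel two_ne_zero, one_mul]
  exact Finset.sum_congr rfl fun j _ => by
    rw [fderiv_weightedV_single_zero, fderiv_weightedV_zero_single, fderiv_weightedS_single_zero,
      fderiv_weightedS_zero_single, Pi.mul_apply]
    ring

theorem canPB_weightedT_weightedS :
    canPB (weightedT a) (weightedS b) p = -(2 * weightedT (a * b) p) := by
  rw [weightedT, ← mul_assoc, mul_one_div_cancel two_ne_zero, one_mul, ← Finset.sum_neg_distrib]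
  exact Finset.sum_congr rfl fun j _ => by
    rw [fderiv_weightedT_single_zero, fderiv_weightedT_zero_single, fderiv_weightedS_single_zero,
      fderiv_weightedS_zero_single, Pi.mul_apply]
    ring

end Brackets

section Casimir

variable {N : ℕ} (a b : Fin N → ℝ) (p : PhaseSpace N)

theorem weightedV_smul (k : ℝ) : weightedV (k • a) p = k * weightedV a p := by
  simp only [weightedV, Pi.smul_apply, smul_eq_mul, Finset.mul_sum]
  exact Finset.sum_congr rfl fun i _ => by ring

theorem weightedT_smul (k : ℝ) : weightedT (k • a) p = k * weightedT a p := by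
  simp only [weightedT, Pi.smul_apply, smul_eq_mul, Finset.mul_sum]
  exact Finset.sum_congr rfl fun i _ => by ring

theorem weightedS_smul (k : ℝ) : weightedS (k • a) p = k * weightedS a p := by
  simp only [weightedS, Pi.smul_apply, smul_eq_mul, Finset.mul_sum]
  exact Finset.sum_congr rfl fun i _ => by ring

theorem canPB_weightedW_left (g : PhaseSpace N → ℝ) :
    canPB (weightedW a) g p
      = 4 * weightedT a p * canPB (weightedV a) g p + 4 * weightedV a p * canPB (weightedT a) g p
        - 2 * weightedS a p * canPB (weightedS a) g p := by
  have hV := differentiableAt_weightedV a p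
  have hT := differentiableAt_weightedT a p
  have hS := differentiableAt_weightedS a p
  have hW : weightedW a
      = fun q => 4 * weightedV a q * weightedT a q - weightedS a q * weightedS a q :=
    funext fun q => by rw [weightedW, sq]
  rw [hW, canPB_sub_left _ (by fun_prop) (by fun_prop), canPB_mul_left _ (by fun_prop) hT,
    canPB_mul_left _ hS hS, canPB_const_mul_left _ _ hV]
  ring

variable {a b} {k : ℝ}

theorem canPB_weightedW_weightedV (hab : a * b = k • a) :
    canPB (weightedW a) (weightedV b) p = 0 := by
  rw [canPB_weightedW_left, canPB_weightedV_weightedV, canPB_antisymm (weightedV b) (weightedT a),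
    canPB_antisymm (weightedV b) (weightedS a), canPB_weightedV_weightedT, canPB_weightedV_weightedS,
    mul_comm b, hab, weightedS_smul, weightedV_smul]
  ring

theorem canPB_weightedW_weightedT (hab : a * b = k • a) :
    canPB (weightedW a) (weightedT b) p = 0 := by
  rw [canPB_weightedW_left, canPB_weightedT_weightedT, canPB_antisymm (weightedT b) (weightedS a),
    canPB_weightedV_weightedT, canPB_weightedT_weightedS, mul_comm b, hab, weightedS_smul,
    weightedT_smul]
  ring

theorem canPB_weightedW_weightedS (hab : a * b = k • a) :
    canPB (weightedW a) (weightedS b) p = 0 := by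
  rw [canPB_weightedW_left, canPB_weightedS_weightedS, canPB_weightedV_weightedS,
    canPB_weightedT_weightedS, hab, weightedV_smul, weightedT_smul]
  ring

end Casimir

section DiracBracket

variable {N : ℕ} (p : PhaseSpace N)

theorem C1fun_eq_weightedV : (C1fun : PhaseSpace N → ℝ) = weightedV 2 :=
  funext fun q => by
    simp only [C1fun, weightedV, Pi.ofNat_apply, Finset.mul_sum]
    exact Finset.sum_congr rfl fun i _ => by ring

theorem C2fun_eq_weightedS : (C2fun : PhaseSpace N → ℝ) = weightedS 1 :=
  funext fun q => by simp [C2fun, weightedS]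

theorem canPB_C1fun_C2fun : canPB C1fun C2fun p = 2 * C1fun p := by
  rw [C1fun_eq_weightedV, C2fun_eq_weightedS, canPB_weightedV_weightedS, mul_one]

theorem canPB_weightedW_C1fun (a : Fin N → ℝ) : canPB (weightedW a) C1fun p = 0 := by
  rw [C1fun_eq_weightedV]
  exact canPB_weightedW_weightedV p (k := 2) (by ext; simp [mul_comm])

theorem canPB_weightedW_C2fun (a : Fin N → ℝ) : canPB (weightedW a) C2fun p = 0 := by
  rw [C2fun_eq_weightedS]
  exact canPB_weightedW_weightedS p (k := 1) (by simp)

theorem diracPB_weightedW_left (a : Fin N → ℝ) (g : PhaseSpace N → ℝ) :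
    diracPB (weightedW a) g p = canPB (weightedW a) g p := by
  simp [diracPB, canPB_weightedW_C1fun, canPB_weightedW_C2fun]

theorem diracPB_C1fun_left (hp : C1fun p ≠ 0) (g : PhaseSpace N → ℝ) : diracPB C1fun g p = 0 := by
  rw [diracPB, canPB_self, canPB_C1fun_C2fun]
  field_simp
  ring

theorem diracPB_C2fun_left (hp : C1fun p ≠ 0) (g : PhaseSpace N → ℝ) : diracPB C2fun g p = 0 := by
  rw [diracPB, canPB_self, canPB_antisymm C1fun C2fun, canPB_C1fun_C2fun]
  field_simp
  ring

end DiracBracket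

section Blocks

variable {N : ℕ} {κ : Type*} (part : Fin N → κ)

def blockIndicator (σ : κ) : Fin N → ℝ := fun i => if part i = σ then 1 else 0

theorem blockIndicator_mul (σ τ : κ) :
    blockIndicator part σ * blockIndicator part τ
      = (if σ = τ then 1 else 0 : ℝ) • blockIndicator part σ := by
  ext i
  by_cases h : part i = σ <;> by_cases h' : σ = τ <;> simp_all [blockIndicator]

end Blocks

section Invariants

variable {n ℓ : ℕ} (part : Fin (n + 1) → Fin (ℓ + 1)) (σ : Fin (ℓ + 1))

theorem Vinv_eq_weightedV : Vinv part σ = weightedV (blockIndicator part σ) :=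
  funext fun q => by simp [Vinv, weightedV, blockIndicator]

theorem Tinv_eq_weightedT : Tinv part σ = weightedT (blockIndicator part σ) :=
  funext fun q => by simp [Tinv, weightedT, blockIndicator]

theorem Sinv_eq_weightedS : Sinv part σ = weightedS (blockIndicator part σ) :=
  funext fun q => by simp [Sinv, weightedS, blockIndicator]

theorem Winv_eq_weightedW : Winv part σ = weightedW (blockIndicator part σ) :=
  funext fun q => by rw [Winv, weightedW, Vinv_eq_weightedV, Tinv_eq_weightedT, Sinv_eq_weightedS]

theorem two_mul_sum_Vinv : (fun q => 2 * ∑ σ, Vinv part σ q) = C1fun :=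
  funext fun q => by
    simp only [Vinv, ← Finset.mul_sum]
    rw [Finset.sum_comm]
    simp [C1fun]

theorem sum_Sinv : (fun q => ∑ σ, Sinv part σ q) = C2fun :=
  funext fun q => by
    simp only [Sinv]
    rw [Finset.sum_comm]
    simp [C2fun]

end Invariants

theorem stmt14_general (n ℓ : ℕ) (part : Fin (n + 1) → Fin (ℓ + 1))
    (p : (Fin (n + 1) → ℝ) × (Fin (n + 1) → ℝ)) (hp : C1fun p ≠ 0) :
    (∀ σ τ : Fin (ℓ + 1),
      diracPB (Winv part σ) (Vinv part τ) p = 0 ∧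
      diracPB (Winv part σ) (Tinv part τ) p = 0 ∧
      diracPB (Winv part σ) (Sinv part τ) p = 0) ∧
    (∀ τ : Fin (ℓ + 1),
      diracPB (fun q => 2 * ∑ σ, Vinv part σ q) (Vinv part τ) p = 0 ∧
      diracPB (fun q => 2 * ∑ σ, Vinv part σ q) (Tinv part τ) p = 0 ∧
      diracPB (fun q => 2 * ∑ σ, Vinv part σ q) (Sinv part τ) p = 0 ∧
      diracPB (fun q => ∑ σ, Sinv part σ q) (Vinv part τ) p = 0 ∧
      diracPB (fun q => ∑ σ, Sinv part σ q) (Tinv part τ) p = 0 ∧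
      diracPB (fun q => ∑ σ, Sinv part σ q) (Sinv part τ) p = 0) := by
  refine ⟨fun σ τ => ?_, fun τ => ?_⟩
  · have hστ := blockIndicator_mul part σ τ
    simp only [Winv_eq_weightedW, Vinv_eq_weightedV, Tinv_eq_weightedT, Sinv_eq_weightedS,
      diracPB_weightedW_left]
    exact ⟨canPB_weightedW_weightedV p hστ, canPB_weightedW_weightedT p hστ,
      canPB_weightedW_weightedS p hστ⟩
  · rw [two_mul_sum_Vinv, sum_Sinv]
    exact ⟨diracPB_C1fun_left p hp _, diracPB_C1fun_left p hp _, diracPB_C1fun_left p hp _,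
      diracPB_C2fun_left p hp _, diracPB_C2fun_left p hp _, diracPB_C2fun_left p hp _⟩

/-- **Casimirs of the singularly reduced degenerate Neumann system.**
With `W_σ = 4V_σT_σ − S_σ²`, `C1 = 2∑_σ V_σ` and `C2 = ∑_σ S_σ`, at every point with
`⟨x,x⟩ ≠ 0` the Dirac brackets of each of `W_σ`, `C1`, `C2` with each of `V_τ`, `T_τ`,
`S_τ` all vanish. -/
theorem stmt14 (n ℓ : ℕ) (part : Fin (n + 1) → Fin (ℓ + 1))
    (hpart : Function.Surjective part)
    (p : (Fin (n + 1) → ℝ) × (Fin (n + 1) → ℝ)) (hp : C1fun p ≠ 0) :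
    (∀ σ τ : Fin (ℓ + 1),
      diracPB (Winv part σ) (Vinv part τ) p = 0 ∧
      diracPB (Winv part σ) (Tinv part τ) p = 0 ∧
      diracPB (Winv part σ) (Sinv part τ) p = 0) ∧
    (∀ τ : Fin (ℓ + 1),
      diracPB (fun q => 2 * ∑ σ, Vinv part σ q) (Vinv part τ) p = 0 ∧
      diracPB (fun q => 2 * ∑ σ, Vinv part σ q) (Tinv part τ) p = 0 ∧
      diracPB (fun q => 2 * ∑ σ, Vinv part σ q) (Sinv part τ) p = 0 ∧
      diracPB (fun q => ∑ σ, Sinv part σ q) (Vinv part τ) p = 0 ∧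
      diracPB (fun q => ∑ σ, Sinv part σ q) (Tinv part τ) p = 0 ∧
      diracPB (fun q => ∑ σ, Sinv part σ q) (Sinv part τ) p = 0) :=
  stmt14_general n ℓ part p hp
end
end

section
/- Singular reduction of the Rosochatius system yields the same Poisson structure: fix real numbers w_0,…,w_ℓ. On ℝ^{ℓ+1} × ℝ^{ℓ+1} with coordinates (ξ, η), at every point with ξ_σ ≠ 0 for all σ, define V_σ = ξ_σ²/2, T_σ = η_σ²/2 + w_σ/(2ξ_σ²), and S_σ = ξ_σ·η_σ. Then these functions satisfy the Dirac bracket relations (with C1 = ⟨ξ,ξ⟩ = 2∑_σ V_σ): {V_σ, T_τ} = S_τ·(δ_{στ} − 2V_σ/C1), {V_σ, S_τ} = 2V_σ·(δ_{στ} − 2V_τ/C1), {T_σ, S_τ} = −2T_σ·(δ_{στ} − 2V_τ/C1), {T_σ, T_τ} = (2T_σ·S_τ − 2T_τ·S_σ)/C1, {S_σ, S_τ} = 0, and {V_σ, V_τ} = 0, for all σ, τ ∈ {0,…,ℓ}. -/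
noncomputable section

/-!
Each of `V_σ`, `T_σ`, `S_σ` depends on `(ξ_σ, η_σ)` alone, so its differential is
`a dξ_σ + b dη_σ`. For two such functions the canonical bracket is `δ_{στ}(ab' − ba')`, and
their brackets with `C1 = ∑ ξ_ν²` and `C2 = ∑ ξ_ν η_ν` are explicit, which gives the closed formula
`{f, g} = (ab' − ba')(δ_{στ} − ξ_σ ξ_τ / C1) + bb'(η_σ ξ_τ − ξ_σ η_τ) / C1`.
The six relations follow by inserting the partial derivatives of `V`, `T` and `S`.
-/

namespace Rosochatius

open ContinuousLinearMap

variable {N : ℕ}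

/-- The differential of a function of `(ξ_σ, η_σ)` alone, with partial derivatives `a` and `b`. -/
def siteForm (σ : Fin N) (a b : ℝ) : (Fin N → ℝ) × (Fin N → ℝ) →L[ℝ] ℝ :=
  a • (proj σ).comp (fst ℝ _ _) + b • (proj σ).comp (snd ℝ _ _)

@[simp]
lemma siteForm_apply (σ : Fin N) (a b : ℝ) (u v : Fin N → ℝ) :
    siteForm σ a b (u, v) = a * u σ + b * v σ := rfl

lemma sum_siteForm_apply_single_fst (c d : Fin N → ℝ) (σ : Fin N) :
    (∑ ν, siteForm ν (c ν) (d ν)) (Pi.single σ 1, 0) = c σ := by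
  simp [sum_apply, Pi.single_apply]

lemma sum_siteForm_apply_single_snd (c d : Fin N → ℝ) (σ : Fin N) :
    (∑ ν, siteForm ν (c ν) (d ν)) (0, Pi.single σ 1) = d σ := by
  simp [sum_apply, Pi.single_apply]

section Derivatives

variable (σ : Fin N) (p : (Fin N → ℝ) × (Fin N → ℝ))

lemma hasFDerivAt_fst_apply :
    HasFDerivAt (fun q : (Fin N → ℝ) × (Fin N → ℝ) => q.1 σ) (siteForm σ 1 0) p :=
  ((proj σ).comp (fst ℝ (Fin N → ℝ) (Fin N → ℝ))).hasFDerivAt.congr_fderiv (by ext <;> simp)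

lemma hasFDerivAt_snd_apply :
    HasFDerivAt (fun q : (Fin N → ℝ) × (Fin N → ℝ) => q.2 σ) (siteForm σ 0 1) p :=
  ((proj σ).comp (snd ℝ (Fin N → ℝ) (Fin N → ℝ))).hasFDerivAt.congr_fderiv (by ext <;> simp)

lemma hasFDerivAt_comp_fst_apply {φ : ℝ → ℝ} {φ' : ℝ} (hφ : HasDerivAt φ φ' (p.1 σ)) :
    HasFDerivAt (fun q : (Fin N → ℝ) × (Fin N → ℝ) => φ (q.1 σ)) (siteForm σ φ' 0) p := by
  have h := hφ.comp_hasFDerivAt p (hasFDerivAt_fst_apply σ p)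
  exact h.congr_fderiv (by ext <;> simp)

lemma hasFDerivAt_comp_snd_apply {φ : ℝ → ℝ} {φ' : ℝ} (hφ : HasDerivAt φ φ' (p.2 σ)) :
    HasFDerivAt (fun q : (Fin N → ℝ) × (Fin N → ℝ) => φ (q.2 σ)) (siteForm σ 0 φ') p := by
  have h := hφ.comp_hasFDerivAt p (hasFDerivAt_snd_apply σ p)
  exact h.congr_fderiv (by ext <;> simp)

lemma hasFDerivAt_fst_apply_sq_div_two :
    HasFDerivAt (fun q : (Fin N → ℝ) × (Fin N → ℝ) => q.1 σ ^ 2 / 2) (siteForm σ (p.1 σ) 0) p :=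
  hasFDerivAt_comp_fst_apply σ p
    (((hasDerivAt_pow 2 (p.1 σ)).div_const 2).congr_deriv (by simp))

lemma hasFDerivAt_fst_apply_mul_self :
    HasFDerivAt (fun q : (Fin N → ℝ) × (Fin N → ℝ) => q.1 σ * q.1 σ)
      (siteForm σ (2 * p.1 σ) 0) p :=
  hasFDerivAt_comp_fst_apply σ p
    (((hasDerivAt_id _).mul (hasDerivAt_id _)).congr_deriv (by simp; ring))

lemma hasFDerivAt_fst_apply_mul_snd_apply :
    HasFDerivAt (fun q : (Fin N → ℝ) × (Fin N → ℝ) => q.1 σ * q.2 σ)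
      (siteForm σ (p.2 σ) (p.1 σ)) p :=
  ((hasFDerivAt_fst_apply σ p).mul (hasFDerivAt_snd_apply σ p)).congr_fderiv
    (by ext <;> simp)

lemma hasFDerivAt_rosochatiusKinetic (w : ℝ) (hσ : p.1 σ ≠ 0) :
    HasFDerivAt (fun q : (Fin N → ℝ) × (Fin N → ℝ) => q.2 σ ^ 2 / 2 + w / (2 * q.1 σ ^ 2))
      (siteForm σ (-w / p.1 σ ^ 3) (p.2 σ)) p := by
  have hkin := hasFDerivAt_comp_snd_apply σ p
    (((hasDerivAt_pow 2 (p.2 σ)).div_const 2).congr_deriv (show _ = p.2 σ by simp))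
  have hpot := hasFDerivAt_comp_fst_apply σ p (((hasDerivAt_const (p.1 σ) w).div
    ((hasDerivAt_pow 2 (p.1 σ)).const_mul 2) (by positivity)).congr_deriv
      (show _ = -w / p.1 σ ^ 3 by field_simp; ring))
  exact (hkin.add hpot).congr_fderiv (by ext <;> simp)

lemma hasFDerivAt_C1fun : HasFDerivAt C1fun (∑ ν, siteForm ν (2 * p.1 ν) 0) p :=
  HasFDerivAt.fun_sum fun ν _ => hasFDerivAt_fst_apply_mul_self ν p

lemma hasFDerivAt_C2fun : HasFDerivAt C2fun (∑ ν, siteForm ν (p.2 ν) (p.1 ν)) p :=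
  HasFDerivAt.fun_sum fun ν _ => hasFDerivAt_fst_apply_mul_snd_apply ν p

end Derivatives

section Brackets

variable {f g : (Fin N → ℝ) × (Fin N → ℝ) → ℝ} {p : (Fin N → ℝ) × (Fin N → ℝ)}
  {σ τ : Fin N} {a b a' b' : ℝ}

lemma canPB_comm (f g : (Fin N → ℝ) × (Fin N → ℝ) → ℝ) (p : (Fin N → ℝ) × (Fin N → ℝ)) :
    canPB f g p = -canPB g f p := by
  rw [canPB, canPB, ← Finset.sum_neg_distrib]
  exact Finset.sum_congr rfl fun _ _ => by ring

lemma canPB_of_hasFDerivAt_siteForm (hf : HasFDerivAt f (siteForm σ a b) p) :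
    canPB f g p = a * fderiv ℝ g p (0, Pi.single σ 1) - b * fderiv ℝ g p (Pi.single σ 1, 0) := by
  simp [canPB, hf.fderiv, Pi.single_apply]

lemma canPB_siteForm (hf : HasFDerivAt f (siteForm σ a b) p)
    (hg : HasFDerivAt g (siteForm τ a' b') p) :
    canPB f g p = if σ = τ then a * b' - b * a' else 0 := by
  rw [canPB_of_hasFDerivAt_siteForm hf, hg.fderiv]
  rcases eq_or_ne σ τ with rfl | h <;> simp [*]

lemma canPB_C1fun (hf : HasFDerivAt f (siteForm σ a b) p) :
    canPB f C1fun p = -(2 * b * p.1 σ) := by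
  rw [canPB_of_hasFDerivAt_siteForm hf, (hasFDerivAt_C1fun p).fderiv,
    sum_siteForm_apply_single_fst, sum_siteForm_apply_single_snd]
  ring

lemma canPB_C2fun (hf : HasFDerivAt f (siteForm σ a b) p) :
    canPB f C2fun p = a * p.1 σ - b * p.2 σ := by
  rw [canPB_of_hasFDerivAt_siteForm hf, (hasFDerivAt_C2fun p).fderiv,
    sum_siteForm_apply_single_fst, sum_siteForm_apply_single_snd]

lemma diracPB_siteForm (hf : HasFDerivAt f (siteForm σ a b) p)
    (hg : HasFDerivAt g (siteForm τ a' b') p) :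
    diracPB f g p = (a * b' - b * a') * ((if σ = τ then 1 else 0) - p.1 σ * p.1 τ / C1fun p)
      + b * b' * (p.2 σ * p.1 τ - p.1 σ * p.2 τ) / C1fun p := by
  rw [diracPB, canPB_siteForm hf hg, canPB_C1fun hf, canPB_C2fun hf,
    canPB_comm C2fun, canPB_C2fun hg, canPB_comm C1fun, canPB_C1fun hg]
  split_ifs <;> ring

end Brackets

end Rosochatius

open Rosochatius

/-- **Singular reduction of the Rosochatius system yields the same Poisson structure.**
On `ℝ^{ℓ+1} × ℝ^{ℓ+1}` with coordinates `(ξ,η)`, fix `w_0,…,w_ℓ ∈ ℝ` and set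
`V_σ = ξ_σ²/2`, `T_σ = η_σ²/2 + w_σ/(2ξ_σ²)`, `S_σ = ξ_σ·η_σ`.  At every point with
`ξ_σ ≠ 0` for all `σ`, these functions satisfy the Dirac bracket relations of the
singularly reduced degenerate Neumann system. -/
theorem stmt15 (ℓ : ℕ) (w : Fin (ℓ + 1) → ℝ)
    (V T S : Fin (ℓ + 1) → (Fin (ℓ + 1) → ℝ) × (Fin (ℓ + 1) → ℝ) → ℝ)
    (hV : V = fun σ q => q.1 σ ^ 2 / 2)
    (hT : T = fun σ q => q.2 σ ^ 2 / 2 + w σ / (2 * q.1 σ ^ 2))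
    (hS : S = fun σ q => q.1 σ * q.2 σ)
    (p : (Fin (ℓ + 1) → ℝ) × (Fin (ℓ + 1) → ℝ))
    (hp : ∀ σ, p.1 σ ≠ 0) (σ τ : Fin (ℓ + 1)) :
    diracPB (V σ) (T τ) p
      = S τ p * ((if σ = τ then 1 else 0) - 2 * V σ p / C1fun p) ∧
    diracPB (V σ) (S τ) p
      = 2 * V σ p * ((if σ = τ then 1 else 0) - 2 * V τ p / C1fun p) ∧
    diracPB (T σ) (S τ) p
      = -(2 * T σ p) * ((if σ = τ then 1 else 0) - 2 * V τ p / C1fun p) ∧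
    diracPB (T σ) (T τ) p
      = (2 * T σ p * S τ p - 2 * T τ p * S σ p) / C1fun p ∧
    diracPB (S σ) (S τ) p = 0 ∧
    diracPB (V σ) (V τ) p = 0 := by
  have hV' (ν) : HasFDerivAt (V ν) (siteForm ν (p.1 ν) 0) p :=
    hV ▸ hasFDerivAt_fst_apply_sq_div_two ν p
  have hT' (ν) : HasFDerivAt (T ν) (siteForm ν (-w ν / p.1 ν ^ 3) (p.2 ν)) p :=
    hT ▸ hasFDerivAt_rosochatiusKinetic ν p (w ν) (hp ν)
  have hS' (ν) : HasFDerivAt (S ν) (siteForm ν (p.2 ν) (p.1 ν)) p :=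
    hS ▸ hasFDerivAt_fst_apply_mul_snd_apply ν p
  rw [diracPB_siteForm (hV' σ) (hT' τ), diracPB_siteForm (hV' σ) (hS' τ),
    diracPB_siteForm (hT' σ) (hS' τ), diracPB_siteForm (hT' σ) (hT' τ),
    diracPB_siteForm (hS' σ) (hS' τ), diracPB_siteForm (hV' σ) (hV' τ)]
  subst hV hT hS
  have hσ := hp σ
  have hτ := hp τ
  rcases eq_or_ne σ τ with rfl | hστ <;>
    refine ⟨?_, ?_, ?_, ?_, ?_, ?_⟩ <;> simp only [↓reduceIte, *] <;> field_simp <;> ring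
end
end

section
/- Relative equilibria of the reduced degenerate Neumann system: let b_0 < b_1 < … < b_ℓ be real numbers and w_0, …, w_ℓ > 0. Suppose ξ ∈ ℝ^{ℓ+1} with ξ_σ ≠ 0 for all σ and ∑_σ ξ_σ² = 1, and β ∈ ℝ satisfy the critical point condition b_σ·ξ_σ − w_σ/ξ_σ³ = β·ξ_σ for every σ (i.e. ∇V_μ(ξ) = β·ξ for the amended potential). Then β < b_0, and for every σ one has ξ_σ² = √( w_σ/(b_σ − β) ); moreover the critical value of the amended potential is V_μ(ξ) = ½ ∑_σ √w_σ · ( ω_σ + b_σ/ω_σ ), where ω_σ = √(b_σ − β). -/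
/-!
Each critical point equation `b ξ - w / ξ³ = β ξ` decouples into `(b - β) ξ⁴ = w`. Since `w > 0`,
this forces `b - β > 0` for every index (in particular `β < b₀`) and determines `ξ² = √w / ω` with
`ω = √(b - β)`, from which each summand of the amended potential is `√w (ω + b / ω)`.
-/

namespace NeumannRelEq

variable {b w β x : ℝ}

lemma sub_mul_pow_four_eq_of_critical (hx : x ≠ 0) (h : b * x - w / x ^ 3 = β * x) :
    (b - β) * x ^ 4 = w := by
  field_simp at h
  linear_combination h

lemma sub_pos_of_sub_mul_pow_four_eq (hw : 0 < w) (h : (b - β) * x ^ 4 = w) : 0 < b - β :=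
  pos_of_mul_pos_left (h ▸ hw) (by positivity)

lemma sq_eq_sqrt_div_of_sub_mul_pow_four_eq (hβ : 0 < b - β) (h : (b - β) * x ^ 4 = w) :
    x ^ 2 = √(w / (b - β)) := by
  rw [← h, mul_div_cancel_left₀ _ hβ.ne', show x ^ 4 = (x ^ 2) ^ 2 by ring,
    Real.sqrt_sq (sq_nonneg _)]

lemma amended_summand_eq (hw : 0 < w) (hβ : 0 < b - β) (hx : x ^ 2 = √(w / (b - β))) :
    b * x ^ 2 + w / x ^ 2 = √w * (√(b - β) + b / √(b - β)) := by
  have hω : 0 < √(b - β) := Real.sqrt_pos.mpr hβ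
  have hsw : 0 < √w := Real.sqrt_pos.mpr hw
  rw [hx, Real.sqrt_div hw.le]
  field_simp
  linear_combination (-√(b - β) ^ 2) * Real.mul_self_sqrt hw.le

end NeumannRelEq

open NeumannRelEq in
theorem stmt18_general (ℓ : ℕ) (b : Fin (ℓ + 1) → ℝ)
    (w : Fin (ℓ + 1) → ℝ) (hw : ∀ σ, 0 < w σ)
    (ξ : Fin (ℓ + 1) → ℝ) (hξ : ∀ σ, ξ σ ≠ 0)
    (β : ℝ) (hcrit : ∀ σ, b σ * ξ σ - w σ / (ξ σ) ^ 3 = β * ξ σ) :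
    β < b 0 ∧
    (∀ σ, (ξ σ) ^ 2 = Real.sqrt (w σ / (b σ - β))) ∧
    (1 / 2) * (∑ σ, (b σ * (ξ σ) ^ 2 + w σ / (ξ σ) ^ 2))
      = (1 / 2) * ∑ σ, Real.sqrt (w σ) *
          (Real.sqrt (b σ - β) + b σ / Real.sqrt (b σ - β)) := by
  have hquartic σ := sub_mul_pow_four_eq_of_critical (hξ σ) (hcrit σ)
  have hpos σ := sub_pos_of_sub_mul_pow_four_eq (hw σ) (hquartic σ)
  have hsq σ := sq_eq_sqrt_div_of_sub_mul_pow_four_eq (hpos σ) (hquartic σ)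
  refine ⟨sub_pos.mp (hpos 0), hsq, ?_⟩
  congr 1
  exact Finset.sum_congr rfl fun σ _ => amended_summand_eq (hw σ) (hpos σ) (hsq σ)

/-- **Relative equilibria of the reduced degenerate Neumann system.**
Let `b_0 < … < b_ℓ`, `w_σ > 0`, and suppose `ξ` with `ξ_σ ≠ 0`, `∑ ξ_σ² = 1` and `β ∈ ℝ`
satisfy the critical point condition `b_σ ξ_σ − w_σ/ξ_σ³ = β ξ_σ` for every `σ`
(`∇V_μ(ξ) = β ξ` for the amended potential).  Then `β < b_0`, `ξ_σ² = √(w_σ/(b_σ − β))`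
for every `σ`, and the critical value of the amended potential is
`V_μ(ξ) = ½ ∑_σ √w_σ (ω_σ + b_σ/ω_σ)` where `ω_σ = √(b_σ − β)`. -/
theorem stmt18 (ℓ : ℕ) (b : Fin (ℓ + 1) → ℝ) (hb : StrictMono b)
    (w : Fin (ℓ + 1) → ℝ) (hw : ∀ σ, 0 < w σ)
    (ξ : Fin (ℓ + 1) → ℝ) (hξ : ∀ σ, ξ σ ≠ 0) (hsphere : ∑ σ, (ξ σ) ^ 2 = 1)
    (β : ℝ) (hcrit : ∀ σ, b σ * ξ σ - w σ / (ξ σ) ^ 3 = β * ξ σ) :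
    β < b 0 ∧
    (∀ σ, (ξ σ) ^ 2 = Real.sqrt (w σ / (b σ - β))) ∧
    (1 / 2) * (∑ σ, (b σ * (ξ σ) ^ 2 + w σ / (ξ σ) ^ 2))
      = (1 / 2) * ∑ σ, Real.sqrt (w σ) *
          (Real.sqrt (b σ - β) + b σ / Real.sqrt (b σ - β)) :=
  stmt18_general ℓ b w hw ξ hξ β hcrit
end

section
/- Convexity of the critical energy of the relative equilibria: let b_0 < b_1 < … < b_ℓ be real numbers. (i) For every j = (j_0,…,j_ℓ) with j_σ > 0 for all σ, there exists a unique β < b_0 such that ∑_{σ=0}^{ℓ} j_σ/√(b_σ − β) = 1; denote this solution by β(j) and set ω_σ(j) = √(b_σ − β(j)). (ii) The function h(j) = ∑_{σ=0}^{ℓ} j_σ·( ω_σ(j) + b_σ/ω_σ(j) ) is convex on the open set { j ∈ ℝ^{ℓ+1} : j_σ > 0 for all σ }. -/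
/-!
On the constraint surface the energy equals `β + 2 ∑ j_σ √(b_σ - β)`. For fixed `j` this
expression is concave in `β`, with derivative `1 - ∑ j_σ / √(b_σ - β)`, so it is maximised
exactly at `β(j)`. Hence `h(j) = max_β (β + 2 ∑ j_σ √(b_σ - β))` is a supremum of affine
functions of `j`, and therefore convex. Existence and uniqueness of `β(j)` follow from the
intermediate value theorem, since `β ↦ ∑ j_σ / √(b_σ - β)` increases strictly from `0` to `∞`
on `(-∞, b_0)`.
-/

open Finset Real

theorem convexOn_envelope {E T : Type*} [AddCommMonoid E] [Module ℝ E] {s : Set E}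
    {g : T → E → ℝ} (t : E → T) (hs : Convex ℝ s) (hg : ∀ x ∈ s, ConvexOn ℝ s (g (t x)))
    (hle : ∀ x ∈ s, ∀ y ∈ s, g (t y) x ≤ g (t x) x) :
    ConvexOn ℝ s fun x => g (t x) x := by
  refine ⟨hs, fun x hx y hy a c ha hc hac => ?_⟩
  have hz : a • x + c • y ∈ s := hs hx hy ha hc hac
  calc g (t (a • x + c • y)) (a • x + c • y)
      ≤ a • g (t (a • x + c • y)) x + c • g (t (a • x + c • y)) y :=
        (hg _ hz).2 hx hy ha hc hac
    _ ≤ a • g (t x) x + c • g (t y) y := by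
        gcongr
        exacts [hle x hx _ hz, hle y hy _ hz]

theorem sqrt_le_sqrt_add_div {u v : ℝ} (hu : 0 ≤ u) (hv : 0 < v) :
    √u ≤ √v + (u - v) / (2 * √v) := by
  have hsv : 0 < √v := sqrt_pos.mpr hv
  rw [← sub_le_iff_le_add', le_div_iff₀ (by positivity)]
  nlinarith [sq_nonneg (√u - √v), sq_sqrt hu, sq_sqrt hv.le]

section Constraint

variable {ι : Type*} [Fintype ι] {b j : ι → ℝ} {i₀ : ι}

theorem strictMonoOn_sum_div_sqrt_sub (hmin : ∀ σ, b i₀ ≤ b σ) (hj : ∀ σ, 0 ≤ j σ)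
    (hj₀ : 0 < j i₀) :
    StrictMonoOn (fun β => ∑ σ, j σ / √(b σ - β)) (Set.Iio (b i₀)) := by
  intro β₁ _ β₂ hβ₂ hlt
  have hpos : ∀ σ, 0 < b σ - β₂ := fun σ => by linarith [hmin σ, Set.mem_Iio.mp hβ₂]
  have hsqrt : ∀ σ, √(b σ - β₂) < √(b σ - β₁) := fun σ =>
    sqrt_lt_sqrt (hpos σ).le (by linarith)
  exact Finset.sum_lt_sum
    (fun σ _ => div_le_div_of_nonneg_left (hj σ) (sqrt_pos.mpr (hpos σ)) (hsqrt σ).le)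
    ⟨i₀, mem_univ _, div_lt_div_of_pos_left hj₀ (sqrt_pos.mpr (hpos i₀)) (hsqrt i₀)⟩

theorem continuousOn_sum_div_sqrt_sub (hmin : ∀ σ, b i₀ ≤ b σ) :
    ContinuousOn (fun β => ∑ σ, j σ / √(b σ - β)) (Set.Iio (b i₀)) :=
  continuousOn_finsetSum _ fun σ _ => continuousOn_const.div (by fun_prop) fun β hβ =>
    (sqrt_pos.mpr (by linarith [hmin σ, Set.mem_Iio.mp hβ])).ne'

theorem exists_sum_div_sqrt_sub_eq_one (hmin : ∀ σ, b i₀ ≤ b σ) (hj : ∀ σ, 0 ≤ j σ)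
    (hj₀ : 0 < j i₀) : ∃ β < b i₀, ∑ σ, j σ / √(b σ - β) = 1 := by
  set S := ∑ σ, j σ
  have hS : 0 ≤ S := sum_nonneg fun σ _ => hj σ
  set β₁ := b i₀ - (S + 1) ^ 2
  set β₂ := b i₀ - (j i₀ / 2) ^ 2
  have hβ₂ : β₂ < b i₀ := by simp only [β₂]; nlinarith
  have hβ₁₂ : β₁ ≤ β₂ := by
    have : j i₀ ≤ S := single_le_sum (fun σ _ => hj σ) (mem_univ i₀)
    simp only [β₁, β₂]; nlinarith
  have hlow : ∑ σ, j σ / √(b σ - β₁) ≤ 1 := by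
    have hroot : ∀ σ, S + 1 ≤ √(b σ - β₁) := fun σ => by
      rw [← sqrt_sq (by positivity : 0 ≤ S + 1)]
      exact sqrt_le_sqrt (by simp only [β₁]; linarith [hmin σ])
    calc ∑ σ, j σ / √(b σ - β₁) ≤ ∑ σ, j σ / (S + 1) :=
          sum_le_sum fun σ _ => div_le_div_of_nonneg_left (hj σ) (by positivity) (hroot σ)
      _ = S / (S + 1) := by rw [sum_div]
      _ ≤ 1 := (div_le_one (by positivity)).mpr (by linarith)
  have hhigh : 1 ≤ ∑ σ, j σ / √(b σ - β₂) := by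
    have hroot : √(b i₀ - β₂) = j i₀ / 2 := by
      simp only [β₂, sub_sub_cancel]; exact sqrt_sq (by positivity)
    calc 1 ≤ j i₀ / (j i₀ / 2) := by field_simp; norm_num
      _ = j i₀ / √(b i₀ - β₂) := by rw [hroot]
      _ ≤ ∑ σ, j σ / √(b σ - β₂) :=
          single_le_sum (f := fun σ => j σ / √(b σ - β₂))
            (fun σ _ => div_nonneg (hj σ) (sqrt_nonneg _)) (mem_univ i₀)
  obtain ⟨β, hβ, hβeq⟩ := intermediate_value_Icc hβ₁₂
    ((continuousOn_sum_div_sqrt_sub hmin).mono fun x hx => hx.2.trans_lt hβ₂) ⟨hlow, hhigh⟩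
  exact ⟨β, hβ.2.trans_lt hβ₂, hβeq⟩

theorem existsUnique_sum_div_sqrt_sub_eq_one (hmin : ∀ σ, b i₀ ≤ b σ) (hj : ∀ σ, 0 ≤ j σ)
    (hj₀ : 0 < j i₀) : ∃! β, β < b i₀ ∧ ∑ σ, j σ / √(b σ - β) = 1 := by
  obtain ⟨β, hβ, hβeq⟩ := exists_sum_div_sqrt_sub_eq_one hmin hj hj₀
  refine ⟨β, ⟨hβ, hβeq⟩, fun β' ⟨hβ', hβ'eq⟩ => ?_⟩
  exact (strictMonoOn_sum_div_sqrt_sub hmin hj hj₀).injOn hβ' hβ (hβ'eq.trans hβeq.symm)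

end Constraint

section ReducedEnergy

variable {ι : Type*} [Fintype ι] {b j : ι → ℝ} {β β' : ℝ}

noncomputable def reducedEnergy (b j : ι → ℝ) (β : ℝ) : ℝ :=
  β + 2 * ∑ σ, j σ * √(b σ - β)

theorem convexOn_reducedEnergy (b : ι → ℝ) (β : ℝ) {s : Set (ι → ℝ)} (hs : Convex ℝ s) :
    ConvexOn ℝ s fun j => reducedEnergy b j β := by
  refine ⟨hs, fun x _ y _ a c _ _ hac => le_of_eq ?_⟩
  simp only [reducedEnergy, Pi.add_apply, Pi.smul_apply, smul_eq_mul, add_mul,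
    sum_add_distrib, mul_assoc, ← mul_sum]
  linear_combination (-β) * hac

theorem sum_mul_sqrt_add_div_sqrt_eq_reducedEnergy (hβ : ∀ σ, β < b σ)
    (hc : ∑ σ, j σ / √(b σ - β) = 1) :
    ∑ σ, j σ * (√(b σ - β) + b σ / √(b σ - β)) = reducedEnergy b j β := by
  have hterm : ∀ σ, j σ * (√(b σ - β) + b σ / √(b σ - β)) =
      2 * (j σ * √(b σ - β)) + β * (j σ / √(b σ - β)) := fun σ => by
    have hv : 0 < b σ - β := sub_pos.mpr (hβ σ)
    have hs : 0 < √(b σ - β) := sqrt_pos.mpr hv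
    field_simp
    linear_combination (-j σ) * sq_sqrt hv.le
  rw [sum_congr rfl fun σ _ => hterm σ, sum_add_distrib, ← mul_sum, ← mul_sum, hc,
    reducedEnergy]
  ring

/-- The hypothesis `hc` says that `β` is a critical point of the concave function
`reducedEnergy b j`; the tangent-line bound for `√` makes it a global maximum. -/
theorem reducedEnergy_le_of_sum_div_sqrt_eq_one (hj : ∀ σ, 0 ≤ j σ) (hβ' : ∀ σ, β' ≤ b σ)
    (hβ : ∀ σ, β < b σ) (hc : ∑ σ, j σ / √(b σ - β) = 1) :
    reducedEnergy b j β' ≤ reducedEnergy b j β := by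
  have htangent : ∀ σ, j σ * √(b σ - β') ≤
      j σ * √(b σ - β) + (β - β') / 2 * (j σ / √(b σ - β)) := fun σ => by
    have hv : 0 < b σ - β := sub_pos.mpr (hβ σ)
    have hs : 0 < √(b σ - β) := sqrt_pos.mpr hv
    calc j σ * √(b σ - β')
        ≤ j σ * (√(b σ - β) + (b σ - β' - (b σ - β)) / (2 * √(b σ - β))) :=
          mul_le_mul_of_nonneg_left (sqrt_le_sqrt_add_div (sub_nonneg.mpr (hβ' σ)) hv) (hj σ)
      _ = j σ * √(b σ - β) + (β - β') / 2 * (j σ / √(b σ - β)) := by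
          field_simp
          ring
  have hsum := sum_le_sum fun σ (_ : σ ∈ univ) => htangent σ
  rw [sum_add_distrib, ← mul_sum, hc] at hsum
  simp only [reducedEnergy]
  linarith

end ReducedEnergy

/-- **Convexity of the critical energy of the relative equilibria.**
Let `b_0 < … < b_ℓ`.
(i) For every `j` with all `j_σ > 0` there is a unique `β < b_0` with
`∑_σ j_σ/√(b_σ − β) = 1`.
(ii) Denoting this solution by `β(j)` and setting `ω_σ(j) = √(b_σ − β(j))`, the critical
energy `h(j) = ∑_σ j_σ (ω_σ(j) + b_σ/ω_σ(j))` is a convex function on the positive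
orthant `{j : ∀ σ, j_σ > 0}`. -/
theorem stmt19 (ℓ : ℕ) (b : Fin (ℓ + 1) → ℝ) (hb : StrictMono b) :
    (∀ j : Fin (ℓ + 1) → ℝ, (∀ σ, 0 < j σ) →
      ∃! β : ℝ, β < b 0 ∧ ∑ σ, j σ / Real.sqrt (b σ - β) = 1) ∧
    (∀ βf : (Fin (ℓ + 1) → ℝ) → ℝ,
      (∀ j : Fin (ℓ + 1) → ℝ, (∀ σ, 0 < j σ) →
        βf j < b 0 ∧ ∑ σ, j σ / Real.sqrt (b σ - βf j) = 1) →
      ConvexOn ℝ {j : Fin (ℓ + 1) → ℝ | ∀ σ, 0 < j σ}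
        (fun j => ∑ σ, j σ *
          (Real.sqrt (b σ - βf j) + b σ / Real.sqrt (b σ - βf j)))) := by
  have hmin : ∀ σ, b 0 ≤ b σ := fun σ => hb.monotone (Fin.zero_le σ)
  refine ⟨fun j hj => existsUnique_sum_div_sqrt_sub_eq_one hmin (fun σ => (hj σ).le) (hj 0),
    fun βf hβf => ?_⟩
  have hlt : ∀ j, (∀ σ, 0 < j σ) → ∀ σ, βf j < b σ := fun j hj σ =>
    (hβf j hj).1.trans_le (hmin σ)
  have hs : Convex ℝ {j : Fin (ℓ + 1) → ℝ | ∀ σ, 0 < j σ} := by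
    simpa [Set.pi] using convex_pi (s := Set.univ) fun _ _ => convex_Ioi (0 : ℝ)
  refine (convexOn_envelope (g := fun β j => reducedEnergy b j β) βf hs
    (fun _ _ => convexOn_reducedEnergy b _ hs) fun x hx y hy => ?_).congr fun j hj => ?_
  · exact reducedEnergy_le_of_sum_div_sqrt_eq_one (fun σ => (hx σ).le)
      (fun σ => (hlt y hy σ).le) (hlt x hx) (hβf x hx).2
  · exact (sum_mul_sqrt_add_div_sqrt_eq_reducedEnergy (hlt j hj) (hβf j hj).2).symm
end
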